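/- arXiv:1204.3190 — 5 statements merged into one kernel-verified Lean document; each statement's English description precedes it below -/
import Mathlib

section
/- Let m ≥ −1 and ℓ ≥ 0 be integers, and let E_{m+1} = {U_i : i ∈ [m+1]} ∪ {V_i^{(j)} : i ∈ [m], j ∈ [ℓ]} be a sequence of mutually independent events such that for each i the events U_i, V_i^{(1)}, ..., V_i^{(ℓ)} each occur with probability u_i ∈ (0,1). If the sequence (u_i)_{i=1}^{m+1} is increasing in i, then the probability L_ℓ(m, u) that no L-gap occurs in E_{m+1} satisfies L_ℓ(m, u) ≥ ∏_{i=1}^{m+1} β_{ℓ+1}(u_i). -/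
/-!
Let `T_k` be the event that none of the gaps among `U_0, …, U_k` occurs, `a_k = P(T_k)` and
`b_k = P(T_k ∩ ¬U_k)`. The events `U_{k+1}, V_k^{(1)}, …, V_k^{(ℓ)}` are independent of everything
that `T_k` and `U_k` depend on, which yields the linear recursion
`a_{k+1} = a_k - b_k q_k (1 - u_{k+1})`, `b_{k+1} = (a_k - b_k q_k) (1 - u_{k+1})`,
`q_k = (1 - u_k)^ℓ`. By induction, `∏_{i ≤ k} β(u_i) ≤ a_k - b_k (1 - β(u_k)) / (1 - u_k)`.
The induction step is the inequality `(1 - u)^{ℓ+1} (β(u') - u') ≤ β(u') (1 - β(u))` for `u ≤ u'`;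
it follows from `β(1 - β) = (1 - u)^{ℓ+1} (β - u)` (`β` is the larger root of
`x² = (1 - q) x + u q` with `q = (1 - u)^{ℓ+1}`) and the fact that `β(u) / u` is decreasing.
-/

open Filter

namespace Boot

noncomputable def beta (k : ℕ) (u : ℝ) : ℝ :=
  (1 - (1 - u) ^ k + Real.sqrt (1 + (4 * u - 2) * (1 - u) ^ k + (1 - u) ^ (2 * k))) / 2

noncomputable def gfun (k : ℕ) (x : ℝ) : ℝ := - Real.log (beta k (1 - Real.exp (-x)))

end Boot

open Set MeasureTheory ProbabilityTheory MeasurableSpace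

theorem le_of_sq_eq_mul_add {x y r r' s s' : ℝ} (hx : 0 < x) (hs₀ : 0 ≤ s) (hr : r' ≤ r)
    (hs : s' ≤ s) (hx_sq : x ^ 2 = r * x + s) (hy_sq : y ^ 2 = r' * y + s') : y ≤ x := by
  by_contra! hxy
  have hrx : r ≤ x := by nlinarith
  nlinarith [mul_le_mul_of_nonneg_right hr (hx.trans hxy).le]

theorem ProbabilityTheory.iIndepSet.measure_inter_biInter_compl {Ω ι : Type*}
    [MeasurableSpace Ω] {μ : Measure Ω} {S : ι → Set Ω} (hSm : ∀ i, MeasurableSet (S i))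
    (hS : iIndepSet S μ) {I : Set ι} {A : Set Ω}
    (hA : MeasurableSet[generateFrom {t | ∃ i ∈ I, S i = t}] A) {F : Finset ι}
    (hF : ∀ i ∈ F, i ∉ I) :
    μ (A ∩ ⋂ i ∈ F, (S i)ᶜ) = μ A * ∏ i ∈ F, μ (S i)ᶜ := by
  have hindep := (Indep_iff _ _ μ).1 <| hS.indep_generateFrom_of_disjoint hSm I F
    (Set.disjoint_right.2 fun i hi hI ↦ hF i hi hI)
  have hB : MeasurableSet[generateFrom {t | ∃ k ∈ (F : Set ι), S k = t}] (⋂ i ∈ F, (S i)ᶜ) :=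
    .biInter F.countable_toSet fun i hi ↦
      (measurableSet_generateFrom (s := {t | ∃ k ∈ (F : Set ι), S k = t}) ⟨i, hi, rfl⟩).compl
  rw [hindep A _ hA hB]
  congr 1
  exact ((iIndepSet_iff_iIndep S μ).1 hS).meas_biInter fun i _ ↦
    (measurableSet_generateFrom (mem_singleton _)).compl

namespace Boot

section Beta

variable {k : ℕ} {u u' : ℝ}

theorem beta_sq (hu₀ : 0 ≤ u) (hu₁ : u ≤ 1) :
    beta k u ^ 2 = (1 - (1 - u) ^ k) * beta k u + u * (1 - u) ^ k := by
  have hq : 0 ≤ (1 - u) ^ k := pow_nonneg (by linarith) k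
  have hdisc : 1 + (4 * u - 2) * (1 - u) ^ k + (1 - u) ^ (2 * k)
      = (1 - (1 - u) ^ k) ^ 2 + 4 * u * (1 - u) ^ k := by
    rw [pow_mul']; ring
  rw [beta, hdisc]
  linear_combination
    Real.sq_sqrt (by positivity : 0 ≤ (1 - (1 - u) ^ k) ^ 2 + 4 * u * (1 - u) ^ k) / 4

/-- `β_k(u)` is the larger root of `x ^ 2 = (1 - q) x + u q` with `q = (1 - u) ^ k`, and this
quadratic is negative at `u` and positive at `1`. -/
theorem beta_mem_Ioo (hu : u ∈ Ioo 0 1) : beta k u ∈ Ioo u 1 := by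
  obtain ⟨hu₀, hu₁⟩ := hu
  have hq : 0 < (1 - u) ^ k := pow_pos (by linarith) k
  have hsq := beta_sq (k := k) hu₀.le hu₁.le
  have hvertex : (1 - (1 - u) ^ k) / 2 ≤ beta k u := by
    rw [beta]; linarith [Real.sqrt_nonneg (1 + (4 * u - 2) * (1 - u) ^ k + (1 - u) ^ (2 * k))]
  constructor
  · by_contra! h
    nlinarith [mul_nonneg (sub_nonneg.2 h) (by linarith : 0 ≤ u + beta k u - (1 - (1 - u) ^ k))]
  · by_contra! h
    nlinarith [mul_nonneg (sub_nonneg.2 h) (by linarith : 0 ≤ beta k u + 1 - (1 - (1 - u) ^ k)),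
      mul_pos hq (sub_pos.2 hu₁)]

/-- `x = β_k(u) / u` solves `x ^ 2 = r x + s` with `r = ∑_{i<k} (1 - u) ^ i` and
`s = (1 - u) ^ k / u`, both decreasing in `u`. -/
theorem beta_div_antitoneOn : AntitoneOn (fun u ↦ beta k u / u) (Ioo 0 1) := by
  have hquad : ∀ v ∈ Ioo (0 : ℝ) 1, (beta k v / v) ^ 2
      = (∑ i ∈ Finset.range k, (1 - v) ^ i) * (beta k v / v) + (1 - v) ^ k / v := by
    rintro v ⟨hv₀, hv₁⟩
    have hgeom : 1 - (1 - v) ^ k = v * ∑ i ∈ Finset.range k, (1 - v) ^ i := by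
      linear_combination geom_sum_mul (1 - v) k
    field_simp
    linear_combination beta_sq (k := k) hv₀.le hv₁.le + beta k v * hgeom
  intro u hu u' hu' huu'
  have h1u' : 0 ≤ 1 - u' := by linarith [hu'.2]
  have h1u : 0 ≤ 1 - u := by linarith
  refine le_of_sq_eq_mul_add (div_pos (hu.1.trans (beta_mem_Ioo hu).1) hu.1)
    (div_nonneg (pow_nonneg h1u k) hu.1.le) ?_ ?_ (hquad u hu) (hquad u' hu')
  · exact Finset.sum_le_sum fun i _ ↦ pow_le_pow_left₀ h1u' (by linarith) i
  · exact div_le_div₀ (pow_nonneg h1u k) (pow_le_pow_left₀ h1u' (by linarith) k) hu.1 huu'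

theorem one_sub_pow_mul_beta_sub_le (hu : u ∈ Ioo 0 1) (hu' : u' ∈ Ioo 0 1) (huu' : u ≤ u') :
    (1 - u) ^ k * (beta k u' - u') ≤ beta k u' * (1 - beta k u) := by
  obtain ⟨hβu, hβ1⟩ := beta_mem_Ioo (k := k) hu
  have hcross : beta k u' * u ≤ beta k u * u' :=
    (div_le_div_iff₀ hu'.1 hu.1).1 (beta_div_antitoneOn hu hu' huu')
  have hβ_mul : beta k u * (1 - beta k u) = (1 - u) ^ k * (beta k u - u) := by
    linear_combination -beta_sq (k := k) hu.1.le hu.2.le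
  refine le_of_mul_le_mul_right ?_ (sub_pos.2 hβu)
  calc (1 - u) ^ k * (beta k u' - u') * (beta k u - u)
      = beta k u * (1 - beta k u) * (beta k u' - u') := by rw [hβ_mul]; ring
    _ ≤ beta k u' * (1 - beta k u) * (beta k u - u) := by
      nlinarith [mul_nonneg (sub_nonneg.2 hβ1.le) (sub_nonneg.2 hcross)]

end Beta

theorem mul_beta_le_of_le_sub {L : ℕ} {u u' P a b : ℝ} (hu : u ∈ Ioo 0 1) (hu' : u' ∈ Ioo 0 1)
    (huu' : u ≤ u') (hb : 0 ≤ b) (hP : P ≤ a - (1 - beta (L + 1) u) / (1 - u) * b) :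
    P * beta (L + 1) u' ≤ a - b * (1 - u) ^ L * (1 - u')
      - (1 - beta (L + 1) u') / (1 - u') * (a * (1 - u') - b * (1 - u) ^ L * (1 - u')) := by
  have hβ' := beta_mem_Ioo (k := L + 1) hu'
  have h1u : 0 < 1 - u := sub_pos.2 hu.2
  have hstep : (1 - u) ^ L * (beta (L + 1) u' - u')
      ≤ beta (L + 1) u' * ((1 - beta (L + 1) u) / (1 - u)) := by
    rw [mul_div_assoc', le_div_iff₀ h1u]
    calc (1 - u) ^ L * (beta (L + 1) u' - u') * (1 - u)
        = (1 - u) ^ (L + 1) * (beta (L + 1) u' - u') := by ring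
      _ ≤ beta (L + 1) u' * (1 - beta (L + 1) u) := one_sub_pow_mul_beta_sub_le hu hu' huu'
  have hrhs : a - b * (1 - u) ^ L * (1 - u')
      - (1 - beta (L + 1) u') / (1 - u') * (a * (1 - u') - b * (1 - u) ^ L * (1 - u'))
      = beta (L + 1) u' * a - b * ((1 - u) ^ L * (beta (L + 1) u' - u')) := by
    field_simp [(sub_pos.2 hu'.2).ne']
    ring
  rw [hrhs]
  nlinarith [mul_le_mul_of_nonneg_left hstep hb,
    mul_le_mul_of_nonneg_right hP (hu'.1.trans hβ'.1).le]

theorem prod_beta_le_sub_of_recursion {L : ℕ} : ∀ {M : ℕ} {u a b : Fin (M + 1) → ℝ},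
    (∀ k, u k ∈ Ioo 0 1) → Monotone u → a 0 = 1 → b 0 = 1 - u 0 → (∀ k, 0 ≤ b k) →
    (∀ i : Fin M, a i.succ
      = a i.castSucc - b i.castSucc * (1 - u i.castSucc) ^ L * (1 - u i.succ)) →
    (∀ i : Fin M, b i.succ
      = a i.castSucc * (1 - u i.succ) - b i.castSucc * (1 - u i.castSucc) ^ L * (1 - u i.succ)) →
    ∏ k, beta (L + 1) (u k) ≤ a (Fin.last M)
      - (1 - beta (L + 1) (u (Fin.last M))) / (1 - u (Fin.last M)) * b (Fin.last M)
  | 0, u, a, b, hu, _, ha₀, hb₀, _, _, _ => by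
    have h1u : 1 - u 0 ≠ 0 := (sub_pos.2 (hu 0).2).ne'
    simp [ha₀, hb₀, h1u]
  | M + 1, u, a, b, hu, hmono, ha₀, hb₀, hb, ha_succ, hb_succ => by
    have ih := prod_beta_le_sub_of_recursion (u := fun k ↦ u k.castSucc)
      (a := fun k ↦ a k.castSucc) (b := fun k ↦ b k.castSucc) (fun k ↦ hu _)
      (hmono.comp Fin.strictMono_castSucc.monotone) ha₀ hb₀ (fun k ↦ hb _)
      (fun i ↦ by simpa only [Fin.succ_castSucc] using ha_succ i.castSucc)
      (fun i ↦ by simpa only [Fin.succ_castSucc] using hb_succ i.castSucc)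
    rw [Fin.prod_univ_castSucc, ← Fin.succ_last, ha_succ, hb_succ]
    exact mul_beta_le_of_le_sub (hu _) (hu _) (hmono (Fin.castSucc_le_succ _)) (hb _) ih

theorem prod_beta_le_of_recursion {L M : ℕ} {u a b : Fin (M + 1) → ℝ}
    (hu : ∀ k, u k ∈ Ioo 0 1) (hmono : Monotone u) (ha₀ : a 0 = 1) (hb₀ : b 0 = 1 - u 0)
    (hb : ∀ k, 0 ≤ b k)
    (ha_succ : ∀ i : Fin M, a i.succ
      = a i.castSucc - b i.castSucc * (1 - u i.castSucc) ^ L * (1 - u i.succ))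
    (hb_succ : ∀ i : Fin M, b i.succ
      = a i.castSucc * (1 - u i.succ) - b i.castSucc * (1 - u i.castSucc) ^ L * (1 - u i.succ)) :
    ∏ k, beta (L + 1) (u k) ≤ a (Fin.last M) := by
  have hweight : 0 ≤ (1 - beta (L + 1) (u (Fin.last M))) / (1 - u (Fin.last M)) :=
    div_nonneg (sub_nonneg.2 (beta_mem_Ioo (hu _)).2.le) (sub_nonneg.2 (hu _).2.le)
  linarith [prod_beta_le_sub_of_recursion hu hmono ha₀ hb₀ hb ha_succ hb_succ,
    mul_nonneg hweight (hb (Fin.last M))]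

section Gaps

variable {Ω : Type*} {M L : ℕ} (U : Fin (M + 1) → Set Ω) (V : Fin M → Fin L → Set Ω)

def gap (i : Fin M) : Set Ω := (U i.castSucc)ᶜ ∩ (U i.succ)ᶜ ∩ ⋂ j, (V i j)ᶜ

def noGapUpTo (k : Fin (M + 1)) : Set Ω := ⋂ (i : Fin M) (_ : i.succ ≤ k), (gap U V i)ᶜ

theorem noGapUpTo_zero : noGapUpTo U V 0 = univ := by
  simp [noGapUpTo, Fin.succ_ne_zero]

theorem noGapUpTo_succ (i : Fin M) :
    noGapUpTo U V i.succ = noGapUpTo U V i.castSucc \ gap U V i := by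
  ext ω
  simp only [noGapUpTo, mem_iInter, Set.mem_sdiff, mem_compl_iff]
  constructor
  · intro h
    exact ⟨fun j hj ↦ h j (hj.trans (Fin.castSucc_le_succ i)), h i le_rfl⟩
  · rintro ⟨h, hi⟩ j hj
    rcases (Fin.succ_le_succ_iff.1 hj).lt_or_eq with hji | rfl
    · exact h j (Fin.succ_le_castSucc_iff.2 hji)
    · exact hi

theorem noGapUpTo_last :
    noGapUpTo U V (Fin.last M)
      = {ω | ∀ i, ω ∈ U i.castSucc ∨ ω ∈ U i.succ ∨ ∃ j, ω ∈ V i j} := by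
  ext ω
  simp only [noGapUpTo, gap, Fin.le_last, mem_iInter, mem_compl_iff, mem_inter_iff, not_and,
    not_forall, not_not, forall_const, mem_ofPred_eq]
  exact forall_congr' fun i ↦ by tauto

theorem gap_subset_compl_succ (i : Fin M) : gap U V i ⊆ (U i.succ)ᶜ :=
  inter_subset_left.trans inter_subset_right

def events : Fin (M + 1) ⊕ (Fin M × Fin L) → Set Ω := Sum.elim U fun x ↦ V x.1 x.2

/-- `U k` is revealed in round `k` and `V i j` in round `i + 1`: `noGapUpTo U V k` and `U k` are
decided by round `k`, and the events of round `k + 1` are independent of them. -/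
def round : Fin (M + 1) ⊕ (Fin M × Fin L) → ℕ := Sum.elim (↑) fun x ↦ x.1 + 1

abbrev history (n : ℕ) : MeasurableSpace Ω :=
  generateFrom {t | ∃ x ∈ {x | round x ≤ n}, events U V x = t}

variable {U V}

theorem measurableSet_history_events {n : ℕ} {x : Fin (M + 1) ⊕ (Fin M × Fin L)}
    (hx : round x ≤ n) : MeasurableSet[history U V n] (events U V x) :=
  measurableSet_generateFrom ⟨x, hx, rfl⟩

theorem measurableSet_history_gap {n : ℕ} {i : Fin M} (hi : (i : ℕ) + 1 ≤ n) :
    MeasurableSet[history U V n] (gap U V i) :=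
  ((measurableSet_history_events (x := .inl i.castSucc) (by simp [round]; omega)).compl.inter
    (measurableSet_history_events (x := .inl i.succ) (by simpa [round])).compl).inter
    (.iInter fun j ↦ (measurableSet_history_events (x := .inr (i, j)) hi).compl)

theorem measurableSet_history_noGapUpTo (k : Fin (M + 1)) :
    MeasurableSet[history U V k] (noGapUpTo U V k) :=
  .iInter fun _ ↦ .iInter fun hi ↦ (measurableSet_history_gap (Fin.le_def.1 hi)).compl

variable [MeasurableSpace Ω]

theorem measurableSet_events (hUm : ∀ k, MeasurableSet (U k))
    (hVm : ∀ i j, MeasurableSet (V i j)) (x : Fin (M + 1) ⊕ (Fin M × Fin L)) :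
    MeasurableSet (events U V x) :=
  x.rec hUm fun x ↦ hVm x.1 x.2

theorem measurableSet_gap (hUm : ∀ k, MeasurableSet (U k)) (hVm : ∀ i j, MeasurableSet (V i j))
    (i : Fin M) : MeasurableSet (gap U V i) :=
  ((hUm _).compl.inter (hUm _).compl).inter (.iInter fun j ↦ (hVm i j).compl)

variable {μ : Measure Ω}

theorem measure_noGapUpTo_inter_compl_succ (hUm : ∀ k, MeasurableSet (U k))
    (hVm : ∀ i j, MeasurableSet (V i j)) (hindep : iIndepSet (events U V) μ) (i : Fin M) :
    μ (noGapUpTo U V i.castSucc ∩ (U i.succ)ᶜ)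
      = μ (noGapUpTo U V i.castSucc) * μ (U i.succ)ᶜ := by
  simpa [events] using hindep.measure_inter_biInter_compl (measurableSet_events hUm hVm)
    (measurableSet_history_noGapUpTo i.castSucc) (F := {.inl i.succ}) (by simp [round])

theorem measure_noGapUpTo_inter_gap (hUm : ∀ k, MeasurableSet (U k))
    (hVm : ∀ i j, MeasurableSet (V i j)) (hindep : iIndepSet (events U V) μ) (i : Fin M) :
    μ (noGapUpTo U V i.castSucc ∩ gap U V i)
      = μ (noGapUpTo U V i.castSucc ∩ (U i.castSucc)ᶜ) * (μ (U i.succ)ᶜ * ∏ j, μ (V i j)ᶜ) := by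
  classical
  let F : Finset (Fin (M + 1) ⊕ (Fin M × Fin L)) :=
    insert (.inl i.succ) (Finset.univ.image fun j ↦ .inr (i, j))
  have hF : ⋂ x ∈ F, (events U V x)ᶜ = (U i.succ)ᶜ ∩ ⋂ j, (V i j)ᶜ := by
    simp [F, events]
  have hprod : ∏ x ∈ F, μ (events U V x)ᶜ = μ (U i.succ)ᶜ * ∏ j, μ (V i j)ᶜ := by
    rw [Finset.prod_insert (by simp), Finset.prod_image fun _ _ _ _ h ↦ by simpa using h]
    rfl
  have h := hindep.measure_inter_biInter_compl (measurableSet_events hUm hVm)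
    (A := noGapUpTo U V i.castSucc ∩ (U i.castSucc)ᶜ) (F := F)
    ((measurableSet_history_noGapUpTo i.castSucc).inter
      (measurableSet_history_events (x := .inl i.castSucc) le_rfl).compl) (by simp [F, round])
  rw [hF, hprod] at h
  rw [← h, gap]
  simp only [inter_assoc]

variable [IsProbabilityMeasure μ] {u : Fin (M + 1) → ℝ}

theorem measureReal_noGapUpTo_inter_gap (hUm : ∀ k, MeasurableSet (U k))
    (hVm : ∀ i j, MeasurableSet (V i j)) (hindep : iIndepSet (events U V) μ)
    (hU : ∀ k, μ.real (U k) = u k) (hV : ∀ i j, μ.real (V i j) = u i.castSucc) (i : Fin M) :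
    μ.real (noGapUpTo U V i.castSucc ∩ gap U V i)
      = μ.real (noGapUpTo U V i.castSucc ∩ (U i.castSucc)ᶜ) * (1 - u i.castSucc) ^ L
        * (1 - u i.succ) := by
  have h := congrArg ENNReal.toReal (measure_noGapUpTo_inter_gap hUm hVm hindep i)
  simp only [ENNReal.toReal_mul, ENNReal.toReal_prod, ← measureReal_def,
    probReal_compl_eq_one_sub (hUm _), probReal_compl_eq_one_sub (hVm _ _), hU, hV,
    Finset.prod_const, Finset.card_univ, Fintype.card_fin] at h
  rw [h]
  ring

theorem measureReal_noGapUpTo_succ (hUm : ∀ k, MeasurableSet (U k))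
    (hVm : ∀ i j, MeasurableSet (V i j)) (hindep : iIndepSet (events U V) μ)
    (hU : ∀ k, μ.real (U k) = u k) (hV : ∀ i j, μ.real (V i j) = u i.castSucc) (i : Fin M) :
    μ.real (noGapUpTo U V i.succ)
      = μ.real (noGapUpTo U V i.castSucc)
        - μ.real (noGapUpTo U V i.castSucc ∩ (U i.castSucc)ᶜ) * (1 - u i.castSucc) ^ L
          * (1 - u i.succ) := by
  rw [noGapUpTo_succ, ← measureReal_noGapUpTo_inter_gap hUm hVm hindep hU hV,
    ← measureReal_inter_add_sdiff (s := noGapUpTo U V i.castSucc) (measurableSet_gap hUm hVm i)]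
  ring

theorem measureReal_noGapUpTo_succ_inter_compl (hUm : ∀ k, MeasurableSet (U k))
    (hVm : ∀ i j, MeasurableSet (V i j)) (hindep : iIndepSet (events U V) μ)
    (hU : ∀ k, μ.real (U k) = u k) (hV : ∀ i j, μ.real (V i j) = u i.castSucc) (i : Fin M) :
    μ.real (noGapUpTo U V i.succ ∩ (U i.succ)ᶜ)
      = μ.real (noGapUpTo U V i.castSucc) * (1 - u i.succ)
        - μ.real (noGapUpTo U V i.castSucc ∩ (U i.castSucc)ᶜ) * (1 - u i.castSucc) ^ L
          * (1 - u i.succ) := by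
  have hsplit := measureReal_inter_add_sdiff (μ := μ)
    (s := noGapUpTo U V i.castSucc ∩ (U i.succ)ᶜ) (measurableSet_gap hUm hVm i)
  rw [inter_assoc, inter_eq_right.2 (gap_subset_compl_succ U V i), inter_sdiff_right_comm,
    ← noGapUpTo_succ, measureReal_noGapUpTo_inter_gap hUm hVm hindep hU hV] at hsplit
  have hindep_succ :=
    congrArg ENNReal.toReal (measure_noGapUpTo_inter_compl_succ hUm hVm hindep i)
  simp only [ENNReal.toReal_mul, ← measureReal_def, probReal_compl_eq_one_sub (hUm _), hU]
    at hindep_succ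
  linarith

end Gaps

open MeasureTheory ProbabilityTheory in
/-- **Lemma (Statement 2).** Let `N = m + 1` (so `m ≥ -1` corresponds to `N ≥ 0`), and let
`U : Fin N → Set Ω` and `V : Fin (N-1) → Fin L → Set Ω` be mutually independent events such
that `U i, V i 1, …, V i L` each occur with probability `u i`, with `(u i)` increasing.
Then the probability that no `L`-gap occurs (i.e. for every `i ∈ [N-1]` at least one of
`U i, U (i+1), V i 1, …, V i L` occurs) is at least `∏ i, β_{L+1}(u i)`. -/
theorem no_Lgap_prob_ge {Ω : Type*} [MeasurableSpace Ω] (μ : Measure Ω)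
    [IsProbabilityMeasure μ] (N L : ℕ)
    (U : Fin N → Set Ω) (V : Fin (N - 1) → Fin L → Set Ω)
    (hUmeas : ∀ i, MeasurableSet (U i)) (hVmeas : ∀ i j, MeasurableSet (V i j))
    (u : Fin N → ℝ) (hu : ∀ i, u i ∈ Set.Ioo (0 : ℝ) 1) (hmono : Monotone u)
    (hU : ∀ i, (μ (U i)).toReal = u i)
    (hV : ∀ i j, (μ (V i j)).toReal = u (Fin.castLE (Nat.sub_le N 1) i))
    (hindep : iIndepSet (Sum.elim U fun x : Fin (N - 1) × Fin L => V x.1 x.2) μ) :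
    ∏ i, beta (L + 1) (u i) ≤
      (μ {ω | ∀ i : Fin (N - 1),
          ω ∈ U (Fin.castLE (Nat.sub_le N 1) i) ∨
          ω ∈ U ⟨(i : ℕ) + 1, by have := i.isLt; omega⟩ ∨
          ∃ j, ω ∈ V i j}).toReal := by
  obtain _ | M := N
  · simp
  -- `Fin (M + 1 - 1)` and `Fin.castLE _` unfold to `Fin M` and `Fin.castSucc`
  have key := prod_beta_le_of_recursion (L := L) (u := u)
    (a := fun k ↦ μ.real (noGapUpTo U V k)) (b := fun k ↦ μ.real (noGapUpTo U V k ∩ (U k)ᶜ))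
    hu hmono (by simp [noGapUpTo_zero])
    (by simp [noGapUpTo_zero, probReal_compl_eq_one_sub (hUmeas 0)]; exact hU 0)
    (fun _ ↦ measureReal_nonneg) (measureReal_noGapUpTo_succ hUmeas hVmeas hindep hU hV)
    (measureReal_noGapUpTo_succ_inter_compl hUmeas hVmeas hindep hU hV)
  rwa [noGapUpTo_last] at key

end Boot
end

section
/- For every k ∈ ℕ, the function u ↦ β_k(u)/u is monotonically decreasing on the interval (0,1). -/
open Filter

namespace Boot

/-! Writing `s = (1 - u)^k`, `β_k(u)` is the positive root of `x² - (1 - s) x - u s`, so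
`β_k(u) / u` is the positive root of `x² - A x - B` with `A = (1 - s) / u = ∑_{i<k} (1 - u)^i`
and `B = s / u`. Both coefficients decrease on `(0, 1)`, and the positive root
`(A + √(A² + 4B)) / 2` is monotone in `A ≥ 0` and `B`. -/

open Finset

lemma beta_eq_quadratic_root (k : ℕ) (u : ℝ) :
    beta k u = (1 - (1 - u) ^ k + √((1 - (1 - u) ^ k) ^ 2 + 4 * (u * (1 - u) ^ k))) / 2 := by
  unfold beta
  congr 3
  rw [pow_mul']
  ring

lemma quadratic_root_div {u : ℝ} (hu : 0 < u) (a c : ℝ) :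
    (a + √(a ^ 2 + 4 * (u * c))) / 2 / u = (a / u + √((a / u) ^ 2 + 4 * (c / u))) / 2 := by
  have hdisc : (a / u) ^ 2 + 4 * (c / u) = (a ^ 2 + 4 * (u * c)) / u ^ 2 := by
    field_simp
  rw [hdisc, Real.sqrt_div' _ (sq_nonneg u), Real.sqrt_sq hu.le]
  field_simp

lemma geom_sum_one_sub_eq {u : ℝ} (hu : u ≠ 0) (k : ℕ) :
    ∑ i ∈ range k, (1 - u) ^ i = (1 - (1 - u) ^ k) / u := by
  rw [eq_div_iff hu]
  linear_combination -geom_sum_mul (1 - u) k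

lemma beta_div_self_eq (k : ℕ) {u : ℝ} (hu : 0 < u) :
    beta k u / u = (∑ i ∈ range k, (1 - u) ^ i +
      √((∑ i ∈ range k, (1 - u) ^ i) ^ 2 + 4 * ((1 - u) ^ k / u))) / 2 := by
  rw [beta_eq_quadratic_root, quadratic_root_div hu, geom_sum_one_sub_eq hu.ne']

lemma antitoneOn_geom_sum_one_sub (k : ℕ) :
    AntitoneOn (fun u : ℝ => ∑ i ∈ range k, (1 - u) ^ i) (Set.Iic 1) := by
  intro u _ v hv huv
  dsimp only
  gcongr with i
  linarith [Set.mem_Iic.mp hv]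

lemma antitoneOn_one_sub_pow_div_self (k : ℕ) :
    AntitoneOn (fun u : ℝ => (1 - u) ^ k / u) (Set.Ioc 0 1) := by
  intro u hu v hv huv
  exact div_le_div₀ (pow_nonneg (by linarith [hu.2]) k)
    (pow_le_pow_left₀ (by linarith [hv.2]) (by linarith) k) hu.1 huv

/-- **Lemma (Statement 4).** For every `k ∈ ℕ`, the map `u ↦ β_k(u)/u` is monotonically
decreasing on the interval `(0,1)`. -/
theorem beta_div_self_antitoneOn (k : ℕ) :
    AntitoneOn (fun u : ℝ => beta k u / u) (Set.Ioo (0 : ℝ) 1) := by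
  intro u hu v hv huv
  dsimp only
  rw [beta_div_self_eq k hu.1, beta_div_self_eq k hv.1]
  have hA := antitoneOn_geom_sum_one_sub k (Set.mem_Iic.2 hu.2.le) (Set.mem_Iic.2 hv.2.le) huv
  have hB := antitoneOn_one_sub_pow_div_self k (Set.Ioo_subset_Ioc_self hu)
    (Set.Ioo_subset_Ioc_self hv) huv
  have hA_nonneg : 0 ≤ ∑ i ∈ range k, (1 - v) ^ i :=
    sum_nonneg fun i _ => pow_nonneg (by linarith [hv.2]) i
  dsimp only at hA hB
  gcongr

end Boot
end

section
/- Fix integers d ≥ 2, ℓ ≥ 0, n ≥ 1, an integer a ≥ 1, and b⃗ = (b^{(1)},...,b^{(d−1)}) ∈ [n]^{d−1} with b := max_t b^{(t)} satisfying a + 3 ≤ b ≤ n. For every set A ⊆ [n]^d × [2]^ℓ of initially infected sites: if [a]^d × [2]^ℓ is internally semi-spanned in C*([n]^d × [2]^ℓ, 2) and A satisfies the event T_a^{b⃗}, then [b]^d × [2]^ℓ is internally semi-spanned in C*([n]^d × [2]^ℓ, 2). -/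
open Filter

namespace Boot

/-- `λ(d,r) = ∫_0^∞ g_{r-1}(z^{d-r+1}) dz`. -/
noncomputable def lam (d r : ℕ) : ℝ := ∫ z in Set.Ioi (0 : ℝ), gfun (r - 1) (z ^ (d - r + 1))

/-- Iterated logarithm: `iterLog 0 x = x`, `iterLog (k+1) x = log (iterLog k x)`. -/
noncomputable def iterLog : ℕ → ℝ → ℝ
  | 0, x => x
  | (k + 1), x => Real.log (iterLog k x)

/-- Adjacency in `ℤ^k`: `ℓ¹`-distance `1`. -/
def adj {k : ℕ} (v w : Fin k → ℤ) : Prop := (∑ i, |v i - w i|) = 1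

/-- One-step iterates of the bootstrap process with carrier `S` and threshold function `thr`,
starting at `A`; only sites of `S` may become infected. -/
def iterInf {k : ℕ} (S : Set (Fin k → ℤ)) (thr : (Fin k → ℤ) → ℕ) (A : Set (Fin k → ℤ)) :
    ℕ → Set (Fin k → ℤ)
  | 0 => A
  | (t + 1) => iterInf S thr A t ∪
      {v | v ∈ S ∧ thr v ≤ {w | adj v w ∧ w ∈ iterInf S thr A t}.ncard}

/-- Bootstrap closure `[A]`. -/
def bclosure {k : ℕ} (S : Set (Fin k → ℤ)) (thr : (Fin k → ℤ) → ℕ)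
    (A : Set (Fin k → ℤ)) : Set (Fin k → ℤ) :=
  ⋃ t, iterInf S thr A t

open Classical in
/-- The probability, when each site of the finite set `S` is included in the random set `A`
independently with probability `p`, that the configuration `A` satisfies `E`. -/
noncomputable def cfgProb {α : Type*} [DecidableEq α] (S : Finset α) (p : ℝ)
    (E : Finset α → Prop) : ℝ :=
  ∑ A ∈ S.powerset, if E A then p ^ A.card * (1 - p) ^ (S.card - A.card) else 0

/-! ### ordinary `r`-neighbour percolation on `[n]^d` -/

def gridBox (n d : ℕ) : Set (Fin d → ℤ) := {v | ∀ i, 1 ≤ v i ∧ v i ≤ (n : ℤ)}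

noncomputable def gridFinset (n d : ℕ) : Finset (Fin d → ℤ) := Fintype.piFinset fun _ => Finset.Icc 1 (n : ℤ)

def percolates (n d r : ℕ) (A : Set (Fin d → ℤ)) : Prop :=
  gridBox n d ⊆ bclosure (gridBox n d) (fun _ => r) A

noncomputable def Pperc (n d r : ℕ) (p : ℝ) : ℝ :=
  cfgProb (gridFinset n d) p fun A => percolates n d r ↑A

/-- The critical probability `p_c([n]^d, r) = inf {p : P([n]^d,r,p) ≥ 1/2}`. -/
noncomputable def pcrit (n d r : ℕ) : ℝ :=
  sInf {p : ℝ | p ∈ Set.Icc (0 : ℝ) 1 ∧ 1 / 2 ≤ Pperc n d r p}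

/-! ### the structure `C*([n]^d × [2]^ℓ, r)` -/

def low (d ℓ : ℕ) (i : Fin d) : Fin (d + ℓ) := Fin.castAdd ℓ i
def high (d ℓ : ℕ) (j : Fin ℓ) : Fin (d + ℓ) := Fin.natAdd d j

/-- The box `[n]^d × [2]^ℓ`. -/
def cstarBox (n d ℓ : ℕ) : Set (Fin (d + ℓ) → ℤ) :=
  {v | (∀ i : Fin d, 1 ≤ v (low d ℓ i) ∧ v (low d ℓ i) ≤ (n : ℤ)) ∧
    ∀ j : Fin ℓ, 1 ≤ v (high d ℓ j) ∧ v (high d ℓ j) ≤ 2}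

/-- The bottom layer `[n]^d × (1,…,1)`. -/
def bottom (n d ℓ : ℕ) : Set (Fin (d + ℓ) → ℤ) :=
  {v | (∀ i : Fin d, 1 ≤ v (low d ℓ i) ∧ v (low d ℓ i) ≤ (n : ℤ)) ∧
    ∀ j : Fin ℓ, v (high d ℓ j) = 1}

/-- Thresholds of `C*([n]^d × [2]^ℓ, r)`: `r` on the bottom layer, `r + ℓ` elsewhere. -/
def cstarThr (d ℓ r : ℕ) (v : Fin (d + ℓ) → ℤ) : ℕ :=
  if ∀ j : Fin ℓ, v (high d ℓ j) = 1 then r else r + ℓ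

/-- `A` semi-percolates in `C*([n]^d × [2]^ℓ, r)`. -/
def semiPerc (n d ℓ r : ℕ) (A : Set (Fin (d + ℓ) → ℤ)) : Prop :=
  bottom n d ℓ ⊆ bclosure (cstarBox n d ℓ) (cstarThr d ℓ r) A

/-- `S` is internally semi-spanned (for initially infected set `A`) in
`C*([n]^d × [2]^ℓ, r)`. -/
def issp (n d ℓ r : ℕ) (S A : Set (Fin (d + ℓ) → ℤ)) : Prop :=
  S ∩ bottom n d ℓ ⊆ bclosure (cstarBox n d ℓ) (cstarThr d ℓ r) (S ∩ A)

/-- The box `[n]^d × [2]^ℓ` as a finite set of sites. -/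
noncomputable def cstarFinset (n d ℓ : ℕ) : Finset (Fin (d + ℓ) → ℤ) :=
  Fintype.piFinset fun i => if (i : ℕ) < d then Finset.Icc 1 (n : ℤ) else Finset.Icc 1 2

/-- `P(n,d,ℓ,r,p)`: the probability that `A ~ Bin([n+1]^d × [2]^ℓ, p)` semi-percolates in
`C*([n]^d × [2]^ℓ, r)`. -/
noncomputable def Pfun (n d ℓ r : ℕ) (p : ℝ) : ℝ :=
  cfgProb (cstarFinset (n + 1) d ℓ) p fun A => semiPerc n d ℓ r ↑A

/-- A set of sites is occupied by `A` if it meets `A`. -/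
def occ {k : ℕ} (A S : Set (Fin k → ℤ)) : Prop := (A ∩ S).Nonempty

def onesVec (ℓ : ℕ) : Fin ℓ → ℤ := fun _ => 1
def onesPlus (ℓ : ℕ) (j : Fin ℓ) : Fin ℓ → ℤ := fun j' => if j' = j then 2 else 1

/-- The set `[s]^{t-1} × {i} × [s]^{d-t} × {e}` (coordinate `t` equal to `i`, the other
grid coordinates in `[s]`, and the last `ℓ` coordinates given by `e`). -/
def slab (d ℓ : ℕ) (t : Fin d) (i s : ℤ) (e : Fin ℓ → ℤ) : Set (Fin (d + ℓ) → ℤ) :=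
  {v | v (low d ℓ t) = i ∧
    (∀ t' : Fin d, t' ≠ t → 1 ≤ v (low d ℓ t') ∧ v (low d ℓ t') ≤ s) ∧
    ∀ j : Fin ℓ, v (high d ℓ j) = e j}

/-- The event `D_a^b`: for each direction `t`, no `L`-gap occurs in the sequence of occupancy
events of `[i-1]^{t-1} × {i} × [i-1]^{d-t} × (1,…,1)` for `a+1 ≤ i ≤ b` and of
`[i-1]^{t-1} × {i} × [i-1]^{d-t} × ((1,…,1)+e_j)` for `a+1 ≤ i ≤ b-1`, `j ∈ [ℓ]`. -/
def Dab (d ℓ : ℕ) (a b : ℤ) (A : Set (Fin (d + ℓ) → ℤ)) : Prop :=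
  ∀ t : Fin d, ∀ i : ℤ, a + 1 ≤ i → i ≤ b - 1 →
    occ A (slab d ℓ t i (i - 1) (onesVec ℓ)) ∨ occ A (slab d ℓ t (i + 1) i (onesVec ℓ)) ∨
      ∃ j : Fin ℓ, occ A (slab d ℓ t i (i - 1) (onesPlus ℓ j))

/-! For the event `T_a^{b⃗}` we write the dimension as `d = e + 1`; the first `e` grid
coordinates are the directions `t ≠ d` and `Fin.last e` is direction `d`. -/

def fdim (e ℓ : ℕ) (t : Fin e) : Fin (e + 1 + ℓ) := low (e + 1) ℓ t.castSucc
def lastDim (e ℓ : ℕ) : Fin (e + 1 + ℓ) := low (e + 1) ℓ (Fin.last e)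

/-- The cuboid `[bv 1] × ⋯ × [bv e] × {i} × {ev}`. -/
def tslab (e ℓ : ℕ) (bv : Fin e → ℤ) (i : ℤ) (ev : Fin ℓ → ℤ) : Set (Fin (e + 1 + ℓ) → ℤ) :=
  {v | (∀ t : Fin e, 1 ≤ v (fdim e ℓ t) ∧ v (fdim e ℓ t) ≤ bv t) ∧
    v (lastDim e ℓ) = i ∧ ∀ j : Fin ℓ, v (high (e + 1) ℓ j) = ev j}

/-- The site of `[n]^{e+1} × [2]^ℓ` whose first `e+1` coordinates are `w` and whose
last `ℓ` coordinates all equal `1`. -/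
def mkSite (e ℓ : ℕ) (w : Fin (e + 1) → ℤ) : Fin (e + 1 + ℓ) → ℤ :=
  Fin.append w (fun _ : Fin ℓ => 1)

/-- The event `T_a^{b⃗}` (with `b = max_t b⃗ t` passed explicitly). -/
def Tab (e ℓ : ℕ) (a : ℤ) (bvec : Fin e → ℤ) (b : ℤ) (A : Set (Fin (e + 1 + ℓ) → ℤ)) : Prop :=
  -- (i)
  (¬ occ A (tslab e ℓ (fun t => bvec t - 1) (a + 1) (onesVec ℓ)) ∧
    ¬ occ A (tslab e ℓ (fun t => bvec t - 1) (a + 2) (onesVec ℓ))) ∧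
  -- (ii)
  (∀ j : Fin ℓ, ¬ occ A (tslab e ℓ (fun t => bvec t - 1) (a + 1) (onesPlus ℓ j))) ∧
  -- (iii)
  (∀ t : Fin e, ∀ i : ℤ, a + 1 ≤ i → i ≤ b - 1 →
    occ A (slab (e + 1) ℓ t.castSucc i a (onesVec ℓ)) ∨
    occ A (slab (e + 1) ℓ t.castSucc (i + 1) a (onesVec ℓ)) ∨
    ∃ j : Fin ℓ, occ A (slab (e + 1) ℓ t.castSucc i a (onesPlus ℓ j))) ∧
  -- (iv)
  (∀ t : Fin e, occ A (slab (e + 1) ℓ t.castSucc b a (onesVec ℓ))) ∧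
  -- (v)
  (mkSite e ℓ (Fin.snoc bvec (a + 2)) ∈ A) ∧
  -- (vi)
  (∀ i : ℤ, a + 3 ≤ i → i ≤ b - 1 →
    occ A (slab (e + 1) ℓ (Fin.last e) i b (onesVec ℓ)) ∨
    occ A (slab (e + 1) ℓ (Fin.last e) (i + 1) b (onesVec ℓ)) ∨
    ∃ j : Fin ℓ, occ A (slab (e + 1) ℓ (Fin.last e) i b (onesPlus ℓ j))) ∧
  -- (vii)
  occ A (slab (e + 1) ℓ (Fin.last e) b b (onesVec ℓ))

/-- The site `x^{(t)}`: coordinate `t` equal to `2`, all others equal to `1`. -/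
def xsite (e ℓ : ℕ) (t : Fin (e + 1)) : Fin (e + 1 + ℓ) → ℤ :=
  mkSite e ℓ (fun t' => if t' = t then 2 else 1)

/-- The site `y^{(t)}`: coordinates `t` and `d+1,…,d+ℓ` equal to `1`, all others equal `B`. -/
def ysite (e ℓ : ℕ) (B : ℤ) (t : Fin (e + 1)) : Fin (e + 1 + ℓ) → ℤ :=
  mkSite e ℓ (fun t' => if t' = t then 1 else B)

/-- The event `𝒢(a_1, b⃗_1, …, a_m, b⃗_m)` (with `b i = max_t bvec i t` passed explicitly). -/
def Gevent (e ℓ : ℕ) (B : ℤ) (m : ℕ) (hm : 0 < m) (a : Fin m → ℤ)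
    (bvec : Fin m → Fin e → ℤ) (b : Fin m → ℤ) (A : Set (Fin (e + 1 + ℓ) → ℤ)) : Prop :=
  mkSite e ℓ (fun _ => 1) ∈ A ∧
  Dab (e + 1) ℓ 2 (a ⟨0, hm⟩) A ∧
  (∀ i : Fin m, Tab e ℓ (a i) (bvec i) (b i) A) ∧
  (∀ i : Fin m, ∀ h : (i : ℕ) + 1 < m, Dab (e + 1) ℓ (b i) (a ⟨(i : ℕ) + 1, h⟩) A) ∧
  Dab (e + 1) ℓ (b ⟨m - 1, by omega⟩) B A ∧
  (∀ t : Fin (e + 1), xsite e ℓ t ∈ A) ∧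
  (∀ t : Fin (e + 1), ysite e ℓ B t ∈ A)


/-- The box `{1,…,a}^d × [2]^ℓ` (integer upper bound `a`). -/
def zbox (a : ℤ) (d ℓ : ℕ) : Set (Fin (d + ℓ) → ℤ) :=
  {v | (∀ i : Fin d, 1 ≤ v (low d ℓ i) ∧ v (low d ℓ i) ≤ a) ∧
    ∀ j : Fin ℓ, 1 ≤ v (high d ℓ j) ∧ v (high d ℓ j) ≤ 2}


/-!
In the bottom layer every threshold is `2`, and boxes there grow one layer at a time. A layer
lying on a fully infected layer becomes fully infected as soon as one of its sites is infected:
every other site of it has an infected neighbour below and an infected neighbour closer to that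
site. The absence of an `L`-gap at height `i` supplies such a site: an occupied site of the layer,
the site below an occupied site of the next layer, or the site below an occupied site of an
upper layer `(1,…,1) + e_j`. From `[a]^d`, (iii) and (iv) grow the arms
`[a]^{t-1} × [b] × [a]^{d-t}` for `t < d`; the two-neighbour rule fills `[b]^{d-1} × [a]` between
the arms; and (v)–(vii) then grow this box in direction `d` up to `[b]^d`.
-/

open Function

section Bootstrap

variable {k : ℕ}

theorem adj_comm {v w : Fin k → ℤ} : adj v w ↔ adj w v := by
  simp only [adj, abs_sub_comm]

theorem adj_update_iff (f : Fin k → ℤ) (t : Fin k) (x : ℤ) :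
    adj f (update f t x) ↔ |f t - x| = 1 := by
  unfold adj
  rw [Finset.sum_eq_single t (fun u _ hu => by simp [update_of_ne hu]) (by simp),
    update_self]

theorem finite_setOf_adj (v : Fin k → ℤ) : {w | adj v w}.Finite := by
  refine (Set.finite_Icc (v - 1) (v + 1)).subset fun w hw => ?_
  have hle : ∀ i, |v i - w i| ≤ 1 := fun i =>
    hw ▸ Finset.single_le_sum (f := fun j => |v j - w j|) (fun j _ => abs_nonneg _)
      (Finset.mem_univ i)
  constructor <;> intro i <;> have := abs_le.mp (hle i) <;> simp <;> omega

variable (S : Set (Fin k → ℤ)) (thr : (Fin k → ℤ) → ℕ)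

theorem iterInf_monotone (A : Set (Fin k → ℤ)) : Monotone (iterInf S thr A) :=
  monotone_nat_of_le_succ fun _ => Set.subset_union_left

theorem iterInf_mono {A B : Set (Fin k → ℤ)} (h : A ⊆ B) (t : ℕ) :
    iterInf S thr A t ⊆ iterInf S thr B t := by
  induction t with
  | zero => exact h
  | succ t ih =>
    rintro v (hv | ⟨hvS, hv⟩)
    · exact Or.inl (ih hv)
    · refine Or.inr ⟨hvS, hv.trans (Set.ncard_le_ncard (fun w hw => ⟨hw.1, ih hw.2⟩)
        ((finite_setOf_adj v).subset fun w hw => hw.1))⟩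

theorem subset_bclosure (A : Set (Fin k → ℤ)) : A ⊆ bclosure S thr A :=
  Set.subset_iUnion (iterInf S thr A) 0

theorem bclosure_mono {A B : Set (Fin k → ℤ)} (h : A ⊆ B) :
    bclosure S thr A ⊆ bclosure S thr B :=
  Set.iUnion_mono (iterInf_mono S thr h)

variable {S thr}

theorem mem_bclosure_of_two_adj {A : Set (Fin k → ℤ)} {v w₁ w₂ : Fin k → ℤ}
    (hv : v ∈ S) (hthr : thr v ≤ 2) (h₁ : w₁ ∈ bclosure S thr A)
    (h₂ : w₂ ∈ bclosure S thr A)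
    (hvw₁ : adj v w₁) (hvw₂ : adj v w₂) (hne : w₁ ≠ w₂) : v ∈ bclosure S thr A := by
  obtain ⟨t₁, h₁⟩ := Set.mem_iUnion.mp h₁
  obtain ⟨t₂, h₂⟩ := Set.mem_iUnion.mp h₂
  refine Set.mem_iUnion.mpr ⟨max t₁ t₂ + 1, Or.inr ⟨hv, ?_⟩⟩
  have h₁' := iterInf_monotone S thr A (le_max_left t₁ t₂) h₁
  have h₂' := iterInf_monotone S thr A (le_max_right t₁ t₂) h₂
  calc thr v ≤ ({w₁, w₂} : Set (Fin k → ℤ)).ncard := by rwa [Set.ncard_pair hne]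
    _ ≤ _ := Set.ncard_le_ncard (by rintro w (rfl | rfl) <;> constructor <;> assumption)
        ((finite_setOf_adj v).subset fun w hw => hw.1)

end Bootstrap

section Descent

variable {k : ℕ}

theorem sum_apply_update_lt (φ : Fin k → ℤ → ℕ) (f : Fin k → ℤ) (t : Fin k) (x : ℤ)
    (h : φ t x < φ t (f t)) : ∑ u, φ u (update f t x u) < ∑ u, φ u (f u) := by
  refine Finset.sum_lt_sum (fun u _ => ?_) ⟨t, Finset.mem_univ t, by rwa [update_self]⟩
  by_cases hu : u = t
  · subst hu; rw [update_self]; exact h.le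
  · rw [update_of_ne hu]

theorem forall_of_step_toward (w : Fin k → ℤ) (P : (Fin k → ℤ) → Prop) (hw : P w)
    (hstep : ∀ f t, f t ≠ w t →
      P (update f t (if f t < w t then f t + 1 else f t - 1)) → P f)
    (f : Fin k → ℤ) : P f := by
  induction hN : ∑ u, (f u - w u).natAbs using Nat.strong_induction_on generalizing f with
  | _ N ih =>
    by_cases hfw : f = w
    · exact hfw ▸ hw
    obtain ⟨t, ht⟩ := Function.ne_iff.mp hfw
    have hlt := sum_apply_update_lt (fun u y => (y - w u).natAbs) f t
      (if f t < w t then f t + 1 else f t - 1) (by split <;> omega)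
    exact hstep f t ht (ih _ (hN ▸ hlt) _ rfl)

theorem forall_of_pair_decrement (a : ℤ) (P : (Fin k → ℤ) → Prop)
    (hone : ∀ f, (∀ t t', a < f t → a < f t' → t = t') → P f)
    (hpair : ∀ f t t', t ≠ t' → a < f t → a < f t' →
      P (update f t (f t - 1)) → P (update f t' (f t' - 1)) → P f)
    (f : Fin k → ℤ) : P f := by
  induction hN : ∑ u, (f u - a).toNat using Nat.strong_induction_on generalizing f with
  | _ N ih =>
    by_cases h : ∀ t t', a < f t → a < f t' → t = t'
    · exact hone f h
    push Not at h
    obtain ⟨t, t', ht, ht', hne⟩ := h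
    have hdec : ∀ s, a < f s → P (update f s (f s - 1)) := fun s hs =>
      ih _ (hN ▸ sum_apply_update_lt (fun _ y => (y - a).toNat) _ _ _ (by omega)) _ rfl
    exact hpair f t t' hne ht ht' (hdec t ht) (hdec t' ht')

end Descent

section Bricks

variable {k : ℕ} {τ t : Fin k} {c h i : ℤ} {f : Fin k → ℤ}

def layer (τ : Fin k) (c i : ℤ) : Set (Fin k → ℤ) :=
  {f | f τ = i ∧ ∀ t ≠ τ, 1 ≤ f t ∧ f t ≤ c}

def brick (τ : Fin k) (c h : ℤ) : Set (Fin k → ℤ) :=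
  {f | (1 ≤ f τ ∧ f τ ≤ h) ∧ ∀ t ≠ τ, 1 ≤ f t ∧ f t ≤ c}

theorem mem_brick_self : f ∈ brick τ c c ↔ ∀ t, 1 ≤ f t ∧ f t ≤ c := by
  refine ⟨fun hf t => ?_, fun hf => ⟨hf τ, fun t _ => hf t⟩⟩
  by_cases ht : t = τ
  · exact ht ▸ hf.1
  · exact hf.2 t ht

theorem brick_subset_gridBox {n : ℕ} (hc : c ≤ n) (hh : h ≤ n) :
    brick τ c h ⊆ gridBox n k := fun f hf t => by
  by_cases ht : t = τ
  · subst ht; exact ⟨hf.1.1, hf.1.2.trans hh⟩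
  · exact ⟨(hf.2 t ht).1, (hf.2 t ht).2.trans hc⟩

theorem layer_subset_brick (hi : 1 ≤ i) (hih : i ≤ h) :
    layer τ c i ⊆ brick τ c h := fun _ hf => ⟨⟨hf.1 ▸ hi, hf.1 ▸ hih⟩, hf.2⟩

theorem update_mem_layer {x : ℤ} (hf : f ∈ layer τ c i) (ht : t ≠ τ)
    (hx : 1 ≤ x ∧ x ≤ c) : update f t x ∈ layer τ c i := by
  refine ⟨by rw [update_of_ne ht.symm, hf.1], fun u hu => ?_⟩
  by_cases hut : u = t
  · subst hut; rwa [update_self]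
  · rw [update_of_ne hut]; exact hf.2 u hu

theorem update_self_mem_layer {j : ℤ} (hf : f ∈ layer τ c i) :
    update f τ j ∈ layer τ c j :=
  ⟨update_self τ j f, fun u hu => by rw [update_of_ne hu]; exact hf.2 u hu⟩

theorem update_sub_one_mem_brick (hf : f ∈ brick τ c h) (ht : 1 < f t) :
    update f t (f t - 1) ∈ brick τ c h := by
  have key : ∀ u, update f t (f t - 1) u = f u ∨ (u = t ∧ update f t (f t - 1) u = f t - 1) :=
    fun u => by
      by_cases hu : u = t
      · subst hu; exact Or.inr ⟨rfl, update_self _ _ _⟩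
      · exact Or.inl (update_of_ne hu _ _)
  refine ⟨?_, fun u hu => ?_⟩
  · rcases key τ with h' | ⟨rfl, h'⟩ <;> rw [h'] <;> have := hf.1 <;> omega
  · rcases key u with h' | ⟨rfl, h'⟩ <;> rw [h'] <;> have := hf.2 u hu <;> omega

end Bricks

section BaseClosure

variable {e ℓ n : ℕ}

@[simp]
theorem mkSite_low (f : Fin (e + 1) → ℤ) (t : Fin (e + 1)) :
    mkSite e ℓ f (low (e + 1) ℓ t) = f t :=
  Fin.append_left _ _ _

@[simp]
theorem mkSite_high (f : Fin (e + 1) → ℤ) (j : Fin ℓ) :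
    mkSite e ℓ f (high (e + 1) ℓ j) = 1 :=
  Fin.append_right _ _ _

theorem append_low_high (x : Fin (e + 1 + ℓ) → ℤ) :
    Fin.append (fun t => x (low (e + 1) ℓ t)) (fun j => x (high (e + 1) ℓ j)) = x :=
  Fin.append_castAdd_natAdd

theorem mkSite_injective : Injective (mkSite e ℓ) := fun f g h =>
  funext fun t => by simpa using congrFun h (low (e + 1) ℓ t)

theorem adj_append_iff {g₁ g₂ : Fin (e + 1) → ℤ} {u : Fin ℓ → ℤ} :
    adj (Fin.append g₁ u) (Fin.append g₂ u) ↔ adj g₁ g₂ := by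
  simp [adj, Fin.sum_univ_add]

theorem adj_mkSite_append_onesPlus (f : Fin (e + 1) → ℤ) (j : Fin ℓ) :
    adj (mkSite e ℓ f) (Fin.append f (onesPlus ℓ j)) := by
  simp only [adj, mkSite, Fin.sum_univ_add, Fin.append_left, Fin.append_right, sub_self,
    abs_zero, Finset.sum_const_zero, zero_add]
  rw [Finset.sum_eq_single j (fun j' _ hj' => by simp [onesPlus, hj']) (by simp)]
  simp [onesPlus]

theorem mkSite_ne_append_onesPlus (f g : Fin (e + 1) → ℤ) (j : Fin ℓ) :
    mkSite e ℓ g ≠ Fin.append f (onesPlus ℓ j) := fun h => by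
  have := congrFun h (high (e + 1) ℓ j)
  rw [mkSite_high, high, Fin.append_right] at this
  simp [onesPlus] at this

theorem mkSite_mem_cstarBox {f : Fin (e + 1) → ℤ} (hf : f ∈ gridBox n (e + 1)) :
    mkSite e ℓ f ∈ cstarBox n (e + 1) ℓ :=
  ⟨fun t => by simpa using hf t, fun j => by simp⟩

theorem cstarThr_mkSite (f : Fin (e + 1) → ℤ) : cstarThr (e + 1) ℓ 2 (mkSite e ℓ f) = 2 :=
  if_pos (mkSite_high f)

def baseClosure (n e ℓ : ℕ) (I : Set (Fin (e + 1 + ℓ) → ℤ)) : Set (Fin (e + 1) → ℤ) :=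
  mkSite e ℓ ⁻¹' bclosure (cstarBox n (e + 1) ℓ) (cstarThr (e + 1) ℓ 2) I

variable {I : Set (Fin (e + 1 + ℓ) → ℤ)} {f g g₁ g₂ : Fin (e + 1) → ℤ}

theorem mem_baseClosure_of_mkSite_mem (h : mkSite e ℓ f ∈ I) : f ∈ baseClosure n e ℓ I :=
  subset_bclosure _ _ I h

theorem mem_baseClosure_of_two_adj (hf : f ∈ gridBox n (e + 1))
    (h₁ : g₁ ∈ baseClosure n e ℓ I) (h₂ : g₂ ∈ baseClosure n e ℓ I)
    (hfg₁ : adj f g₁) (hfg₂ : adj f g₂) (hne : g₁ ≠ g₂) :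
    f ∈ baseClosure n e ℓ I :=
  mem_bclosure_of_two_adj (mkSite_mem_cstarBox hf) (cstarThr_mkSite f).le h₁ h₂
    (adj_append_iff.mpr hfg₁) (adj_append_iff.mpr hfg₂) (mkSite_injective.ne hne)

theorem mem_baseClosure_of_adj_of_upper (hf : f ∈ gridBox n (e + 1))
    (hg : g ∈ baseClosure n e ℓ I) (hfg : adj f g) (j : Fin ℓ)
    (hup : Fin.append f (onesPlus ℓ j) ∈
      bclosure (cstarBox n (e + 1) ℓ) (cstarThr (e + 1) ℓ 2) I) :
    f ∈ baseClosure n e ℓ I :=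
  mem_bclosure_of_two_adj (mkSite_mem_cstarBox hf) (cstarThr_mkSite f).le hg hup
    (adj_append_iff.mpr hfg) (adj_mkSite_append_onesPlus f j) (mkSite_ne_append_onesPlus f g j)

end BaseClosure

/-- The negation of an `L`-gap at `i` in the sequence of events `U_i(τ, c)`, `V_i^{(j)}(τ, c)`. -/
def NoLGap {d ℓ : ℕ} (A : Set (Fin (d + ℓ) → ℤ)) (τ : Fin d) (i c : ℤ) : Prop :=
  occ A (slab d ℓ τ i c (onesVec ℓ)) ∨ occ A (slab d ℓ τ (i + 1) c (onesVec ℓ)) ∨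
    ∃ j : Fin ℓ, occ A (slab d ℓ τ i c (onesPlus ℓ j))

section Growth

variable {e ℓ n : ℕ} {I : Set (Fin (e + 1 + ℓ) → ℤ)} {τ : Fin (e + 1)} {c i : ℤ}

theorem exists_mem_layer_of_occ_slab {ev : Fin ℓ → ℤ}
    (h : occ I (slab (e + 1) ℓ τ i c ev)) :
    ∃ g ∈ layer τ c i, Fin.append g ev ∈ I := by
  obtain ⟨x, hxI, hxτ, hx, hev⟩ := h
  refine ⟨fun t => x (low (e + 1) ℓ t), ⟨hxτ, hx⟩, ?_⟩
  rwa [← funext hev, append_low_high]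

theorem layer_subset_baseClosure_of_mem (hc : c ≤ n) (hi : 1 ≤ i) (hin : i ≤ n)
    (hbelow : layer τ c (i - 1) ⊆ baseClosure n e ℓ I) {w : Fin (e + 1) → ℤ}
    (hw : w ∈ layer τ c i) (hwI : w ∈ baseClosure n e ℓ I) :
    layer τ c i ⊆ baseClosure n e ℓ I := by
  intro f
  refine forall_of_step_toward w (fun f => f ∈ layer τ c i → f ∈ baseClosure n e ℓ I)
    (fun _ => hwI) (fun f t ht hstep hf => ?_) f
  have htτ : t ≠ τ := fun h => ht (h ▸ hf.1.trans hw.1.symm)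
  have hx : 1 ≤ (if f t < w t then f t + 1 else f t - 1) ∧
      (if f t < w t then f t + 1 else f t - 1) ≤ c := by
    have := hf.2 t htτ; have := hw.2 t htτ; split <;> omega
  refine mem_baseClosure_of_two_adj
    ((layer_subset_brick hi le_rfl).trans (brick_subset_gridBox hc hin) hf)
    (hstep (update_mem_layer hf htτ hx)) (hbelow (update_self_mem_layer hf))
    ((adj_update_iff _ _ _).mpr (by split <;> simp))
    ((adj_update_iff _ _ _).mpr (by rw [hf.1]; simp)) fun h => ?_
  have := congrFun h τ
  rw [update_of_ne htτ.symm, update_self, hf.1] at this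
  omega

theorem layer_subset_baseClosure_of_noLGap (hc : c ≤ n) (hi : 1 ≤ i) (hin : i ≤ n)
    (hbelow : layer τ c (i - 1) ⊆ baseClosure n e ℓ I) (h : NoLGap I τ i c) :
    layer τ c i ⊆ baseClosure n e ℓ I := by
  have hgrid : layer τ c i ⊆ gridBox n (e + 1) :=
    (layer_subset_brick hi le_rfl).trans (brick_subset_gridBox hc hin)
  have hdown : ∀ g ∈ layer τ c i, adj g (update g τ (i - 1)) := fun g hg =>
    (adj_update_iff _ _ _).mpr (by rw [hg.1]; simp)
  rcases h with h | h | ⟨j, h⟩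
  · obtain ⟨g, hg, hgI⟩ := exists_mem_layer_of_occ_slab h
    exact layer_subset_baseClosure_of_mem hc hi hin hbelow hg (mem_baseClosure_of_mkSite_mem hgI)
  · obtain ⟨g, hg, hgI⟩ := exists_mem_layer_of_occ_slab h
    have hg' : update g τ i ∈ layer τ c i := update_self_mem_layer hg
    refine layer_subset_baseClosure_of_mem hc hi hin hbelow hg' ?_
    refine mem_baseClosure_of_two_adj (hgrid hg') (mem_baseClosure_of_mkSite_mem hgI)
      (hbelow (update_self_mem_layer hg')) ?_ (hdown _ hg') fun h => ?_
    · rw [adj_comm, adj_update_iff, hg.1]; simp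
    · have := congrFun h τ
      rw [update_self, hg.1] at this
      omega
  · obtain ⟨g, hg, hgI⟩ := exists_mem_layer_of_occ_slab h
    refine layer_subset_baseClosure_of_mem hc hi hin hbelow hg ?_
    exact mem_baseClosure_of_adj_of_upper (hgrid hg) (hbelow (update_self_mem_layer hg))
      (hdown g hg) j (subset_bclosure _ _ I hgI)

theorem brick_subset_baseClosure_of_noLGap {lo hi : ℤ} (hc : c ≤ n) (hlo : 1 ≤ lo)
    (hlohi : lo ≤ hi) (hhi : hi ≤ n) (hbase : brick τ c lo ⊆ baseClosure n e ℓ I)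
    (hgap : ∀ i, lo < i → i ≤ hi → NoLGap I τ i c) :
    brick τ c hi ⊆ baseClosure n e ℓ I := by
  induction hi, hlohi using Int.leInduction with
  | base => exact hbase
  | succ i hloi ih =>
    have hbrick := ih (by omega) fun j hj hji => hgap j hj (by omega)
    rintro f ⟨⟨hf₁, hf₂⟩, hf⟩
    rcases lt_or_eq_of_le hf₂ with hfi | hfi
    · exact hbrick ⟨⟨hf₁, by omega⟩, hf⟩
    · refine layer_subset_baseClosure_of_noLGap hc (by omega) hhi ?_ (hgap _ (by omega) le_rfl)
        ⟨hfi, hf⟩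
      rw [add_sub_cancel_right]
      exact (layer_subset_brick (by omega) le_rfl).trans hbrick

theorem brick_subset_baseClosure_of_arms {a b : ℤ} (ha : 1 ≤ a) (hab : a ≤ b) (hbn : b ≤ n)
    (hcube : brick τ a a ⊆ baseClosure n e ℓ I)
    (harms : ∀ t ≠ τ, brick t a b ⊆ baseClosure n e ℓ I) :
    brick τ b a ⊆ baseClosure n e ℓ I := by
  intro f
  refine forall_of_pair_decrement a (fun f => f ∈ brick τ b a → f ∈ baseClosure n e ℓ I)
    (fun f hone hf => ?_) (fun f t t' htt' ht ht' h h' hf => ?_) f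
  · have hgrid := brick_subset_gridBox hbn (hab.trans hbn) hf
    by_cases hbig : ∃ t, a < f t
    · obtain ⟨t, ht⟩ := hbig
      have htτ : t ≠ τ := fun h => by have := hf.1.2; subst h; omega
      refine harms t htτ ⟨hf.2 t htτ, fun u hu => ⟨(hgrid u).1, ?_⟩⟩
      by_contra! hu'
      exact hu (hone u t hu' ht)
    · push Not at hbig
      exact hcube (mem_brick_self.mpr fun u => ⟨(hgrid u).1, hbig u⟩)
  · have hdec : ∀ s, a < f s → adj f (update f s (f s - 1)) := fun s _ =>
      (adj_update_iff _ _ _).mpr (by simp)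
    refine mem_baseClosure_of_two_adj (brick_subset_gridBox hbn (hab.trans hbn) hf)
      (h (update_sub_one_mem_brick hf (by omega))) (h' (update_sub_one_mem_brick hf (by omega)))
      (hdec t ht) (hdec t' ht') fun heq => ?_
    have := congrFun heq t
    rw [update_self, update_of_ne htt'] at this
    omega

end Growth

section Tab

variable {e ℓ n : ℕ} {A : Set (Fin (e + 1 + ℓ) → ℤ)}

theorem occ_inter_of_subset {k : ℕ} {A S Z : Set (Fin k → ℤ)} (h : occ A S) (hS : S ⊆ Z) :
    occ (Z ∩ A) S :=
  h.mono fun _ hx => ⟨⟨hS hx.2, hx.1⟩, hx.2⟩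

theorem slab_subset_zbox {d : ℕ} {τ : Fin d} {i c b : ℤ} {ev : Fin ℓ → ℤ} (hi : 1 ≤ i)
    (hib : i ≤ b) (hc : c ≤ b) (hev : ∀ j, 1 ≤ ev j ∧ ev j ≤ 2) :
    slab d ℓ τ i c ev ⊆ zbox b d ℓ := by
  rintro v ⟨hvτ, hv, hvev⟩
  refine ⟨fun t => ?_, fun j => hvev j ▸ hev j⟩
  by_cases ht : t = τ
  · subst ht; omega
  · exact ⟨(hv t ht).1, (hv t ht).2.trans hc⟩

theorem onesVec_mem_Icc (j : Fin ℓ) : 1 ≤ onesVec ℓ j ∧ onesVec ℓ j ≤ 2 := by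
  simp [onesVec]

theorem onesPlus_mem_Icc (j j' : Fin ℓ) :
    1 ≤ onesPlus ℓ j j' ∧ onesPlus ℓ j j' ≤ 2 := by
  unfold onesPlus; split <;> omega

theorem NoLGap.inter_zbox {d : ℕ} {A : Set (Fin (d + ℓ) → ℤ)} {τ : Fin d} {i c b : ℤ}
    (h : NoLGap A τ i c) (hi : 1 ≤ i) (hib : i + 1 ≤ b) (hc : c ≤ b) :
    NoLGap (zbox b d ℓ ∩ A) τ i c := by
  rcases h with h | h | ⟨j, h⟩
  · exact Or.inl (occ_inter_of_subset h (slab_subset_zbox hi (by omega) hc onesVec_mem_Icc))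
  · exact Or.inr (Or.inl
      (occ_inter_of_subset h (slab_subset_zbox (by omega) hib hc onesVec_mem_Icc)))
  · exact Or.inr (Or.inr ⟨j,
      occ_inter_of_subset h (slab_subset_zbox hi (by omega) hc (onesPlus_mem_Icc j))⟩)

variable {a b : ℤ} {bvec : Fin e → ℤ}

theorem Tab.noLGap_castSucc (hT : Tab e ℓ a bvec b A) (ha : 0 ≤ a) (t : Fin e) {i : ℤ}
    (hai : a < i) (hib : i ≤ b) : NoLGap (zbox b (e + 1) ℓ ∩ A) t.castSucc i a := by
  rcases lt_or_eq_of_le hib with hib | rfl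
  · exact NoLGap.inter_zbox (hT.2.2.1 t i (by omega) (by omega)) (by omega) (by omega) (by omega)
  · exact Or.inl (occ_inter_of_subset (hT.2.2.2.1 t)
      (slab_subset_zbox (by omega) le_rfl (by omega) onesVec_mem_Icc))

theorem mkSite_snoc_mem_slab {c x : ℤ} (hbvec : ∀ t, 1 ≤ bvec t ∧ bvec t ≤ c) :
    mkSite e ℓ (Fin.snoc bvec x) ∈ slab (e + 1) ℓ (Fin.last e) x c (onesVec ℓ) := by
  refine ⟨by simp, fun t ht => ?_, fun j => by simp [onesVec]⟩
  obtain ⟨s, rfl⟩ := Fin.exists_castSucc_eq.mpr ht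
  simpa using hbvec s

/-- The seed `(b⃗, a + 2)` of (v) closes the would-be gaps at `a + 1` and `a + 2`. -/
theorem Tab.noLGap_last (hT : Tab e ℓ a bvec b A) (ha : 0 ≤ a)
    (hbvec : ∀ t, 1 ≤ bvec t ∧ bvec t ≤ b) (hab : a + 3 ≤ b) {i : ℤ} (hai : a < i)
    (hib : i ≤ b) : NoLGap (zbox b (e + 1) ℓ ∩ A) (Fin.last e) i b := by
  have hseed :
      occ (zbox b (e + 1) ℓ ∩ A) (slab (e + 1) ℓ (Fin.last e) (a + 2) b (onesVec ℓ)) :=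
    occ_inter_of_subset ⟨_, hT.2.2.2.2.1, mkSite_snoc_mem_slab hbvec⟩
      (slab_subset_zbox (by omega) (by omega) le_rfl onesVec_mem_Icc)
  obtain rfl | rfl | ⟨hi, hib⟩ | rfl :
      i = a + 1 ∨ i = a + 2 ∨ (a + 3 ≤ i ∧ i ≤ b - 1) ∨ i = b := by omega
  · exact Or.inr (Or.inl (by rwa [show a + 2 = a + 1 + 1 by ring] at hseed))
  · exact Or.inl hseed
  · exact NoLGap.inter_zbox (hT.2.2.2.2.2.1 i hi hib) (by omega) (by omega) le_rfl
  · exact Or.inl (occ_inter_of_subset hT.2.2.2.2.2.2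
      (slab_subset_zbox (by omega) le_rfl le_rfl onesVec_mem_Icc))

theorem mkSite_mem_zbox {c : ℤ} {f : Fin (e + 1) → ℤ} (hf : ∀ t, 1 ≤ f t ∧ f t ≤ c) :
    mkSite e ℓ f ∈ zbox c (e + 1) ℓ :=
  ⟨fun t => by simpa using hf t, fun j => by simp⟩

theorem zbox_mono {d : ℕ} (hab : a ≤ b) : zbox a d ℓ ⊆ zbox b d ℓ := fun _ hv =>
  ⟨fun t => ⟨(hv.1 t).1, (hv.1 t).2.trans hab⟩, hv.2⟩

theorem brick_subset_baseClosure_of_issp (hspan : issp n (e + 1) ℓ 2 (zbox a (e + 1) ℓ) A)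
    (hab : a ≤ b) (han : a ≤ n) (τ : Fin (e + 1)) :
    brick τ a a ⊆ baseClosure n e ℓ (zbox b (e + 1) ℓ ∩ A) := fun f hf => by
  rw [mem_brick_self] at hf
  have hbottom : mkSite e ℓ f ∈ bottom n (e + 1) ℓ :=
    ⟨fun t => by simpa using And.imp_right (fun h => h.trans han) (hf t), fun j => by simp⟩
  exact bclosure_mono _ _ (Set.inter_subset_inter_left _ (zbox_mono hab))
    (hspan ⟨mkSite_mem_zbox hf, hbottom⟩)

theorem issp_of_brick_subset
    (h : brick (Fin.last e) b b ⊆ baseClosure n e ℓ (zbox b (e + 1) ℓ ∩ A)) :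
    issp n (e + 1) ℓ 2 (zbox b (e + 1) ℓ) A := by
  rintro v ⟨hvz, -, hv1⟩
  have hv : mkSite e ℓ (fun t => v (low (e + 1) ℓ t)) = v := by
    rw [mkSite, ← funext hv1]
    exact append_low_high v
  exact hv ▸ h (mem_brick_self.mpr hvz.1)

end Tab

theorem Tab_growth_general (e ℓ n : ℕ) (a : ℤ) (ha : 1 ≤ a)
    (bvec : Fin e → ℤ) (hbv : ∀ t, 1 ≤ bvec t ∧ bvec t ≤ (n : ℤ))
    (b : ℤ) (hbmax : (∀ t, bvec t ≤ b) ∧ ∃ t, bvec t = b)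
    (hab : a + 3 ≤ b) (hbn : b ≤ (n : ℤ))
    (A : Set (Fin (e + 1 + ℓ) → ℤ))
    (hspan : issp n (e + 1) ℓ 2 (zbox a (e + 1) ℓ) A)
    (hT : Tab e ℓ a bvec b A) :
    issp n (e + 1) ℓ 2 (zbox b (e + 1) ℓ) A := by
  have hcube : ∀ τ, brick τ a a ⊆ baseClosure n e ℓ (zbox b (e + 1) ℓ ∩ A) :=
    brick_subset_baseClosure_of_issp hspan (by omega) (by omega)
  have harms :
      ∀ t ≠ Fin.last e, brick t a b ⊆ baseClosure n e ℓ (zbox b (e + 1) ℓ ∩ A) := by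
    intro t ht
    obtain ⟨s, rfl⟩ := Fin.exists_castSucc_eq.mpr ht
    exact brick_subset_baseClosure_of_noLGap (by omega) ha (by omega) hbn (hcube _)
      fun i hai hib => hT.noLGap_castSucc (by omega) s hai hib
  have hcorner := brick_subset_baseClosure_of_arms ha (by omega) hbn (hcube _) harms
  exact issp_of_brick_subset <| brick_subset_baseClosure_of_noLGap hbn ha (by omega) hbn hcorner
    fun i hai hib => hT.noLGap_last (by omega) (fun t => ⟨(hbv t).1, hbmax.1 t⟩) hab hai hib

/-- **Lemma (Statement 7).** Write `d = e + 1` with `e ≥ 1` (so `d ≥ 2`). Let `a ≥ 1` and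
`b⃗ ∈ [n]^{d−1}` with `b = max_t b⃗ t` satisfying `a + 3 ≤ b ≤ n`. For every initially infected
set `A ⊆ [n]^d × [2]^ℓ`: if `{1,…,a}^d × [2]^ℓ` is internally semi-spanned in
`C*([n]^d × [2]^ℓ, 2)` and the event `T_a^{b⃗}` holds, then `{1,…,b}^d × [2]^ℓ` is
internally semi-spanned in `C*([n]^d × [2]^ℓ, 2)`. -/
theorem Tab_growth (e ℓ n : ℕ) (he : 1 ≤ e) (a : ℤ) (ha : 1 ≤ a)
    (bvec : Fin e → ℤ) (hbv : ∀ t, 1 ≤ bvec t ∧ bvec t ≤ (n : ℤ))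
    (b : ℤ) (hbmax : (∀ t, bvec t ≤ b) ∧ ∃ t, bvec t = b)
    (hab : a + 3 ≤ b) (hbn : b ≤ (n : ℤ))
    (A : Set (Fin (e + 1 + ℓ) → ℤ)) (hA : A ⊆ cstarBox n (e + 1) ℓ)
    (hspan : issp n (e + 1) ℓ 2 (zbox a (e + 1) ℓ) A)
    (hT : Tab e ℓ a bvec b A) :
    issp n (e + 1) ℓ 2 (zbox b (e + 1) ℓ) A :=
  Tab_growth_general e ℓ n a ha bvec hbv b hbmax hab hbn A hspan hT

end Boot
end

section
/- Fix an integer d ≥ 2 and a constant c with 0 < c < 1/4. For all sufficiently small p > 0, setting m = c·p^{−1/(2d−2)} (assumed to be a positive integer), the number of sequences (a_1, b⃗_1, ..., a_m, b⃗_m) — where each a_i is a positive integer and each b⃗_i = (b_i^{(1)},...,b_i^{(d−1)}) is a (d−1)-tuple of positive integers with all coordinates at most b_i := max_t b_i^{(t)} — satisfying p^{−1/(d−1)} ≤ a_1 < b_1 ≤ a_2 < b_2 ≤ ... ≤ a_m < b_m ≤ 2p^{−1/(d−1)} and 3 ≤ b_i − a_i ≤ p^{−1/(2d−2)} for all i ∈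 [m], is at least (1/(4cp))^m. -/
/-!
Write `q = p^{-1/(2d-2)}`, so that `q^{2d-2} = 1/p` and `m = c q`. Cut `[⌈q²⌉, 2q²]` into `m`
consecutive blocks of length `⌊q/c⌋`; they fit because `m ⌊q/c⌋ ≤ q²`. In each block choose
`a_i` among its first `A = ⌊q/c⌋ - ⌊q⌋` positions and a gap `b_i - a_i ∈ [3, ⌊q⌋]`, put `b_i` in
one coordinate of `b⃗_i` and the other `d - 2` coordinates anywhere in `[1, ⌈q²⌉] ⊆ [1, a_i]`.
Distinct choices give distinct sequences, and for `q ≥ 5` we have `4cA ≥ 3q - 1`, hence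
`4c A (⌊q⌋ - 2) ⌈q²⌉^{d-2} ≥ (3q - 1)(q - 3) q^{2d-4} ≥ q^{2d-2} = 1/p`.
-/

theorem Fin.monotone_of_le_next {α : Type*} [Preorder α] {m : ℕ} {f : Fin m → α}
    (h : ∀ i : Fin m, ∀ hi : (i : ℕ) + 1 < m, f i ≤ f ⟨i + 1, hi⟩) : Monotone f := by
  cases m with
  | zero => exact fun i => i.elim0
  | succ n => exact Fin.monotone_iff_le_succ.2 fun i => h i.castSucc (by simp)

namespace Boot

def admissibleSeqs (m e : ℕ) (hm : 1 ≤ m) (lo hi g : ℝ) :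
    Set ((Fin m → ℤ) × (Fin m → Fin e → ℤ)) :=
  {x | (∀ i, 1 ≤ x.1 i) ∧ (∀ i t, 1 ≤ x.2 i t) ∧
    ∃ b : Fin m → ℤ,
      (∀ i, (∀ t, x.2 i t ≤ b i) ∧ ∃ t, x.2 i t = b i) ∧
      lo ≤ ((x.1 ⟨0, hm⟩ : ℤ) : ℝ) ∧
      (∀ i, x.1 i < b i) ∧
      (∀ i : Fin m, ∀ h : (i : ℕ) + 1 < m, b i ≤ x.1 ⟨(i : ℕ) + 1, h⟩) ∧
      ((b ⟨m - 1, Nat.sub_lt hm Nat.one_pos⟩ : ℤ) : ℝ) ≤ hi ∧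
      (∀ i, 3 ≤ b i - x.1 i ∧ ((b i - x.1 i : ℤ) : ℝ) ≤ g)}

theorem admissibleSeqs_finite {m e : ℕ} (hm : 1 ≤ m) (lo hi g : ℝ) :
    (admissibleSeqs m e hm lo hi g).Finite := by
  have hIcc := Set.finite_Icc (1 : ℤ) ⌊hi⌋
  refine ((Set.Finite.pi' fun _ => hIcc).prod
    (Set.Finite.pi' fun _ => Set.Finite.pi' fun _ => hIcc)).subset ?_
  rintro x ⟨ha, hv, b, hb, -, hab, hba, hlast, -⟩
  have hb_mono : Monotone b :=
    Fin.monotone_of_le_next fun i hi => (hba i hi).trans (hab _).le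
  have hb_le (i : Fin m) : b i ≤ ⌊hi⌋ :=
    (hb_mono (Fin.le_def.2 (Nat.le_sub_one_of_lt i.2))).trans (Int.le_floor.2 hlast)
  exact ⟨fun i => ⟨ha i, (hab i).le.trans (hb_le i)⟩,
    fun i t => ⟨hv i t, ((hb i).1 t).trans (hb_le i)⟩⟩

section Blocks

variable {m e : ℕ} (S A D : ℕ)

def blockStart (i : Fin m) : ℤ := S + (i : ℕ) * (A + D + 2)

def blockEncode (y : Fin m → Fin A × Fin D × (Fin e → Fin S)) :
    (Fin m → ℤ) × (Fin m → Fin (e + 1) → ℤ) :=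
  (fun i => blockStart S A D i + (y i).1,
    fun i => Fin.cons (blockStart S A D i + (y i).1 + 3 + (y i).2.1) fun t => (y i).2.2 t + 1)

theorem blockEncode_injective :
    Function.Injective (blockEncode (m := m) (e := e) S A D) := by
  intro y y' h
  simp only [blockEncode, Prod.ext_iff] at h
  obtain ⟨h₁, h₂⟩ := h
  funext i
  obtain ⟨hd, hw⟩ := Fin.cons_inj.1 (congrFun h₂ i)
  have hα : (y i).1 = (y' i).1 := Fin.ext (by have := congrFun h₁ i; omega)
  refine Prod.ext hα (Prod.ext (Fin.ext ?_) (funext fun t => Fin.ext ?_))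
  · rw [hα] at hd; omega
  · have := congrFun hw t; omega

theorem blockEncode_mem_admissibleSeqs (hm : 1 ≤ m) {lo hi g : ℝ} (hS : 1 ≤ S) (hlo : lo ≤ S)
    (hg : (D : ℝ) + 2 ≤ g) (hhi : (S : ℝ) + m * (A + D + 2) - 1 ≤ hi)
    (y : Fin m → Fin A × Fin D × (Fin e → Fin S)) :
    blockEncode S A D y ∈ admissibleSeqs m (e + 1) hm lo hi g := by
  have hstart (i : Fin m) : (S : ℤ) ≤ blockStart S A D i :=
    le_add_of_nonneg_right (by positivity)
  have hnext (i : Fin m) (hi : (i : ℕ) + 1 < m) :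
      blockStart S A D ⟨i + 1, hi⟩ = blockStart S A D i + (A + D + 2) := by
    simp only [blockStart]; push_cast; ring
  have hα (i : Fin m) : ((y i).1 : ℤ) < A := by exact_mod_cast (y i).1.2
  have hd (i : Fin m) : ((y i).2.1 : ℤ) < D := by exact_mod_cast (y i).2.1.2
  have hw (i : Fin m) (t : Fin e) : ((y i).2.2 t : ℤ) < S := by
    exact_mod_cast ((y i).2.2 t).2
  refine ⟨fun i => ?_, fun i t => ?_, fun i => blockStart S A D i + (y i).1 + 3 + (y i).2.1,
    fun i => ⟨fun t => ?_, 0, rfl⟩, ?_, fun i => ?_, fun i hi => ?_, ?_, fun i => ⟨?_, ?_⟩⟩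
  all_goals simp only [blockEncode]
  · linarith [hstart i]
  · refine Fin.cases ?_ (fun t => ?_) t
    · simp only [Fin.cons_zero]
      linarith [hstart i]
    · simp
  · refine Fin.cases le_rfl (fun t => ?_) t
    simp only [Fin.cons_succ]
    linarith [hstart i, hw i t]
  · exact hlo.trans (by exact_mod_cast (hstart _).trans (le_add_of_nonneg_right (by positivity)))
  · linarith
  · linarith [hnext i hi, hα i, hd i]
  · set l : Fin m := ⟨m - 1, Nat.sub_lt hm Nat.one_pos⟩
    have hlast : blockStart S A D l + (A + D + 2) = S + m * (A + D + 2) := by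
      simp only [l, blockStart]; push_cast [Nat.cast_sub hm]; ring
    have : blockStart S A D l + (y l).1 + 3 + (y l).2.1 ≤ (S + m * (A + D + 2) - 1 : ℤ) := by
      linarith [hα l, hd l]
    exact le_trans (by exact_mod_cast this) hhi
  · linarith
  · have : blockStart S A D i + (y i).1 + 3 + (y i).2.1 - (blockStart S A D i + (y i).1)
        ≤ (D + 2 : ℤ) := by
      linarith [hd i]
    exact le_trans (by exact_mod_cast this) hg

theorem le_ncard_admissibleSeqs (hm : 1 ≤ m) {lo hi g : ℝ} (hS : 1 ≤ S) (hlo : lo ≤ S)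
    (hg : (D : ℝ) + 2 ≤ g) (hhi : (S : ℝ) + m * (A + D + 2) - 1 ≤ hi) :
    (A * D * S ^ e) ^ m ≤ (admissibleSeqs m (e + 1) hm lo hi g).ncard := by
  calc (A * D * S ^ e) ^ m
        = (Set.univ : Set (Fin m → Fin A × Fin D × (Fin e → Fin S))).ncard := by
          simp [mul_assoc]
    _ ≤ _ := Set.ncard_le_ncard_of_injOn _
        (fun y _ => blockEncode_mem_admissibleSeqs S A D hm hS hlo hg hhi y)
        (blockEncode_injective S A D).injOn (admissibleSeqs_finite hm lo hi g)

end Blocks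

theorem exists_block_sizes {c q : ℝ} (hc : 0 < c) (hc4 : c < 1 / 4) (hq : 5 ≤ q) :
    ∃ A D : ℕ, (D : ℝ) + 2 ≤ q ∧ c * q * (A + D + 2) ≤ q ^ 2 ∧ q ^ 2 ≤ 4 * c * (A * D) := by
  have hq_le : q ≤ q / c := le_div_self (by linarith) hc (by linarith)
  have h2 : 2 ≤ ⌊q⌋₊ := Nat.le_floor (by norm_num; linarith)
  have hfl : ⌊q⌋₊ ≤ ⌊q / c⌋₊ := Nat.floor_le_floor hq_le
  refine ⟨⌊q / c⌋₊ - ⌊q⌋₊, ⌊q⌋₊ - 2, ?_, ?_, ?_⟩ <;>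
    push_cast [Nat.cast_sub hfl, Nat.cast_sub h2]
  · linarith [Nat.floor_le (show 0 ≤ q by linarith)]
  · have := Nat.floor_le (div_nonneg (show 0 ≤ q by linarith) hc.le)
    calc c * q * (⌊q / c⌋₊ - ⌊q⌋₊ + (⌊q⌋₊ - 2) + 2) = c * q * ⌊q / c⌋₊ := by ring
      _ ≤ c * q * (q / c) := by gcongr
      _ = q ^ 2 := by field_simp
  · have hA : 3 * q - 1 ≤ 4 * c * (⌊q / c⌋₊ - ⌊q⌋₊) := by
      have := Nat.lt_floor_add_one (q / c)
      have hcq : c * (q / c) = q := by field_simp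
      nlinarith [Nat.floor_le (show 0 ≤ q by linarith)]
    have hD : q - 3 ≤ (⌊q⌋₊ : ℝ) - 2 := by linarith [Nat.lt_floor_add_one q]
    calc q ^ 2 ≤ (3 * q - 1) * (q - 3) := by nlinarith
      _ ≤ 4 * c * (⌊q / c⌋₊ - ⌊q⌋₊) * (⌊q⌋₊ - 2) := by gcongr <;> linarith
      _ = _ := by ring

/-- **Lemma (Statement 11).** Write `d = e + 1` with `e ≥ 1` (so `d ≥ 2`), and fix a constant
`0 < c < 1/4`. For all sufficiently small `p > 0`, if `m = c·p^{−1/(2d−2)}` is a positive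
integer, then the number of sequences `(a_i, b⃗_i)_{i=1}^m` of positive integers (with
`b_i = max_t b⃗_i t`) satisfying
`p^{−1/(d−1)} ≤ a₁ < b₁ ≤ a₂ < b₂ ≤ … ≤ a_m < b_m ≤ 2p^{−1/(d−1)}` and
`3 ≤ b_i − a_i ≤ p^{−1/(2d−2)}` for all `i`, is at least `(1/(4cp))^m`. -/
theorem count_sequences (e : ℕ) (he : 1 ≤ e) (c : ℝ) (hc : 0 < c) (hc4 : c < 1 / 4) :
    ∃ p0 : ℝ, 0 < p0 ∧ ∀ p : ℝ, 0 < p → p < p0 → ∀ m : ℕ, ∀ hm : 1 ≤ m,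
      (m : ℝ) = c * p ^ (-(1 : ℝ) / (2 * (e : ℝ))) →
      (1 / (4 * c * p)) ^ m ≤
        (({x : (Fin m → ℤ) × (Fin m → Fin e → ℤ) |
            (∀ i, 1 ≤ x.1 i) ∧ (∀ i t, 1 ≤ x.2 i t) ∧
            ∃ b : Fin m → ℤ,
              (∀ i, (∀ t, x.2 i t ≤ b i) ∧ ∃ t, x.2 i t = b i) ∧
              p ^ (-(1 : ℝ) / (e : ℝ)) ≤ ((x.1 ⟨0, hm⟩ : ℤ) : ℝ) ∧
              (∀ i, x.1 i < b i) ∧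
              (∀ i : Fin m, ∀ h : (i : ℕ) + 1 < m, b i ≤ x.1 ⟨(i : ℕ) + 1, h⟩) ∧
              ((b ⟨m - 1, Nat.sub_lt hm Nat.one_pos⟩ : ℤ) : ℝ) ≤
                2 * p ^ (-(1 : ℝ) / (e : ℝ)) ∧
              (∀ i, 3 ≤ b i - x.1 i ∧
                ((b i - x.1 i : ℤ) : ℝ) ≤ p ^ (-(1 : ℝ) / (2 * (e : ℝ))))}.ncard : ℕ) : ℝ) := by
  obtain ⟨e, rfl⟩ : ∃ k, e = k + 1 := ⟨e - 1, by omega⟩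
  refine ⟨(5 ^ (2 * (e + 1)))⁻¹, by positivity, fun p hp hp0 m hm hmq => ?_⟩
  show _ ≤ ((admissibleSeqs m (e + 1) hm _ _ _).ncard : ℝ)
  set q := p ^ (-(1 : ℝ) / (2 * ((e + 1 : ℕ) : ℝ))) with hq_def
  have hq0 : 0 < q := Real.rpow_pos_of_pos hp _
  have hq_pow : (q ^ 2) ^ (e + 1) = p⁻¹ := by
    rw [← pow_mul, hq_def, ← Real.rpow_natCast, ← Real.rpow_mul hp.le, ← Real.rpow_neg_one]
    congr 1
    push_cast
    field_simp
  have hq_sq : p ^ (-(1 : ℝ) / ((e + 1 : ℕ) : ℝ)) = q ^ 2 := by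
    rw [hq_def, ← Real.rpow_natCast, ← Real.rpow_mul hp.le]
    congr 1
    push_cast
    field_simp
  have hq5 : 5 ≤ q := by
    refine (lt_of_pow_lt_pow_left₀ (2 * (e + 1)) hq0.le ?_).le
    rw [pow_mul q, hq_pow]
    exact (lt_inv_comm₀ (by positivity) hp).2 hp0
  obtain ⟨A, D, hD, hAD, hq_AD⟩ := exists_block_sizes hc hc4 hq5
  set S := ⌈q ^ 2⌉₊
  have hS : q ^ 2 ≤ S := Nat.le_ceil _
  have hcount :=
    le_ncard_admissibleSeqs S A D (e := e) hm (lo := q ^ 2) (hi := 2 * q ^ 2) (g := q)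
    (by exact_mod_cast (show (1 : ℝ) ≤ S by nlinarith)) hS hD
    (by rw [hmq]; linarith [Nat.ceil_lt_add_one (sq_nonneg q)])
  rw [hq_sq]
  calc (1 / (4 * c * p)) ^ m = (q ^ 2 / (4 * c) * (q ^ 2) ^ e) ^ m := by
        rw [div_mul_eq_mul_div, ← pow_succ', hq_pow]
        ring
    _ ≤ (A * D * S ^ e) ^ m := by
        gcongr
        rwa [div_le_iff₀ (by positivity), mul_comm]
    _ ≤ _ := by exact_mod_cast hcount

end Boot
end

section
/- Fix integers d ≥ 2 and ℓ ≥ 0. There exists a constant c_2 > 0 such that for all sufficiently small p > 0 and all real numbers a, b with p^{−1/(d−1)} ≤ a ≤ b ≤ 2p^{−1/(d−1)}, one has g_{ℓ+1}(a^{d−1} q) − g_{ℓ+1}(b^{d−1} q) ≤ c_2 (b^{d−1} − a^{d−1}) q, where q = −log(1−p). -/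
/-!
Everything rests on `g_k` being `(3k + 2)`-Lipschitz on `[1, ∞)`: then `c₂ = 3(ℓ + 1) + 2`
works, because `q = -log(1 - p) ≥ p` and `a^{d-1} ≥ p⁻¹` give `a^{d-1} q ≥ 1`.
The map `x ↦ 1 - e^{-x}` is `1`-Lipschitz and sends `[1, ∞)` into `[1/2, 1]`. On `[1/2, 1]` the
radicand of `β_k` is at least `1`, where the square root is `1/2`-Lipschitz; hence `β_k ≥ 1/2`
and `β_k` is `(3k + 2)/2`-Lipschitz there. Finally `log` is `2`-Lipschitz on `[1/2, ∞)`.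
-/

namespace Boot

open Set Real
open scoped NNReal

theorem lipschitzOnWith_one_sub_exp_neg :
    LipschitzOnWith 1 (fun x : ℝ => 1 - exp (-x)) (Ici 0) := by
  refine (convex_Ici 0).lipschitzOnWith_of_nnnorm_hasDerivWithin_le
    (fun x _ => ((hasDerivAt_neg x).exp.const_sub 1).hasDerivWithinAt) fun x hx => ?_
  rw [← NNReal.coe_le_coe]
  simpa [abs_of_pos (exp_pos _)] using hx

theorem lipschitzOnWith_log_Ici {c : ℝ≥0} (hc : 0 < c) :
    LipschitzOnWith c⁻¹ log (Ici (c : ℝ)) := by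
  have hx0 {x : ℝ} (hx : x ∈ Ici (c : ℝ)) : 0 < x := (NNReal.coe_pos.2 hc).trans_le hx
  refine (convex_Ici _).lipschitzOnWith_of_nnnorm_deriv_le
    (fun x hx => differentiableAt_log (hx0 hx).ne') fun x hx => ?_
  rw [deriv_log', nnnorm_inv]
  refine inv_anti₀ hc ?_
  rw [← NNReal.coe_le_coe, coe_nnnorm, norm_of_nonneg (hx0 hx).le]
  exact hx

theorem lipschitzOnWith_sqrt_Ici {c : ℝ≥0} (hc : 0 < c) :
    LipschitzOnWith (2 * NNReal.sqrt c)⁻¹ sqrt (Ici (c : ℝ)) := by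
  have hx0 {x : ℝ} (hx : x ∈ Ici (c : ℝ)) : 0 < x := (NNReal.coe_pos.2 hc).trans_le hx
  refine (convex_Ici _).lipschitzOnWith_of_nnnorm_hasDerivWithin_le
    (fun x hx => (hasDerivAt_sqrt (hx0 hx).ne').hasDerivWithinAt) fun x hx => ?_
  rw [← NNReal.coe_le_coe, coe_nnnorm, norm_of_nonneg (by positivity)]
  push_cast
  rw [one_div]
  gcongr
  exact hx

theorem abs_pow_sub_pow_le_mul (a b : ℝ) (n : ℕ) (ha : |a| ≤ 1) (hb : |b| ≤ 1) :
    |a ^ n - b ^ n| ≤ n * |a - b| := by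
  have hmax : max |a| |b| ^ (n - 1) ≤ 1 :=
    pow_le_one₀ (le_max_of_le_left (abs_nonneg a)) (max_le ha hb)
  calc |a ^ n - b ^ n| ≤ |a - b| * n * max |a| |b| ^ (n - 1) := abs_pow_sub_pow_le a b n
    _ ≤ |a - b| * n * 1 := by gcongr
    _ = n * |a - b| := by ring

theorem abs_one_sub_pow_sub_one_sub_pow_le (k : ℕ) {u v : ℝ} (hu : u ∈ Icc (0 : ℝ) 2)
    (hv : v ∈ Icc (0 : ℝ) 2) : |(1 - u) ^ k - (1 - v) ^ k| ≤ k * |u - v| := by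
  have h := abs_pow_sub_pow_le_mul (1 - u) (1 - v) k
    (abs_le.2 ⟨by linarith [hu.2], by linarith [hu.1]⟩)
    (abs_le.2 ⟨by linarith [hv.2], by linarith [hv.1]⟩)
  rwa [sub_sub_sub_cancel_left, abs_sub_comm v] at h

theorem one_sub_pow_mem_Icc (k : ℕ) {u : ℝ} (hu : u ∈ Icc (0 : ℝ) 1) :
    (1 - u) ^ k ∈ Icc (0 : ℝ) 1 :=
  ⟨pow_nonneg (by linarith [hu.2]) k, pow_le_one₀ (by linarith [hu.2]) (by linarith [hu.1])⟩

noncomputable def betaDiscr (k : ℕ) (u : ℝ) : ℝ :=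
  1 + (4 * u - 2) * (1 - u) ^ k + (1 - u) ^ (2 * k)

theorem beta_eq (k : ℕ) (u : ℝ) : beta k u = (1 - (1 - u) ^ k + √(betaDiscr k u)) / 2 := rfl

section Beta

variable (k : ℕ) {u v : ℝ}

theorem one_le_betaDiscr (hu : u ∈ Icc (1 / 2 : ℝ) 1) : 1 ≤ betaDiscr k u := by
  have hs := (one_sub_pow_mem_Icc k (Icc_subset_Icc_left (by norm_num) hu)).1
  rw [betaDiscr, pow_mul']
  nlinarith [hu.1]

theorem abs_betaDiscr_sub_le (hu : u ∈ Icc (1 / 2 : ℝ) 1) (hv : v ∈ Icc (1 / 2 : ℝ) 1) :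
    |betaDiscr k u - betaDiscr k v| ≤ 4 * |u - v| + 4 * |(1 - u) ^ k - (1 - v) ^ k| := by
  have key : betaDiscr k u - betaDiscr k v = 4 * (1 - u) ^ k * (u - v)
      + (4 * v - 2 + (1 - u) ^ k + (1 - v) ^ k) * ((1 - u) ^ k - (1 - v) ^ k) := by
    rw [betaDiscr, betaDiscr, pow_mul', pow_mul']; ring
  have hs := one_sub_pow_mem_Icc k (Icc_subset_Icc_left (by norm_num) hu)
  have ht := one_sub_pow_mem_Icc k (Icc_subset_Icc_left (by norm_num) hv)
  set s := (1 - u) ^ k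
  set t := (1 - v) ^ k
  have hw : 0 ≤ 4 * v - 2 + s + t := by linarith [hv.1, hs.1, ht.1]
  calc |betaDiscr k u - betaDiscr k v|
      ≤ |4 * s * (u - v)| + |(4 * v - 2 + s + t) * (s - t)| := key ▸ abs_add_le _ _
    _ = 4 * s * |u - v| + (4 * v - 2 + s + t) * |s - t| := by
        rw [abs_mul (4 * s), abs_mul (4 * v - 2 + s + t), abs_of_nonneg (by linarith [hs.1]),
          abs_of_nonneg hw]
    _ ≤ 4 * 1 * |u - v| + 4 * |s - t| := by
        gcongr
        · exact hs.2
        · linarith [hv.2, hs.2, ht.2]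
    _ = 4 * |u - v| + 4 * |s - t| := by ring

theorem half_le_beta (hu : u ∈ Icc (1 / 2 : ℝ) 1) : 1 / 2 ≤ beta k u := by
  have hs := (one_sub_pow_mem_Icc k (Icc_subset_Icc_left (by norm_num) hu)).2
  have hD : 1 ≤ √(betaDiscr k u) := one_le_sqrt.2 (one_le_betaDiscr k hu)
  rw [beta_eq]
  linarith

theorem lipschitzOnWith_beta :
    LipschitzOnWith ((3 * k + 2) / 2) (beta k) (Icc (1 / 2) 1) := by
  refine LipschitzOnWith.of_dist_le_mul fun u hu v hv => ?_
  have hsqrt := (lipschitzOnWith_sqrt_Ici one_pos).dist_le_mul _ (one_le_betaDiscr k hu) _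
    (one_le_betaDiscr k hv)
  have hst := abs_one_sub_pow_sub_one_sub_pow_le k (Icc_subset_Icc (by norm_num) (by norm_num) hu)
    (Icc_subset_Icc (by norm_num) (by norm_num) hv)
  have hD := abs_betaDiscr_sub_le k hu hv
  rw [NNReal.sqrt_one, mul_one] at hsqrt
  simp only [dist_eq_norm, norm_eq_abs] at hsqrt ⊢
  push_cast at hsqrt ⊢
  calc |beta k u - beta k v|
      = |((1 - v) ^ k - (1 - u) ^ k) + (√(betaDiscr k u) - √(betaDiscr k v))| / 2 := by
        rw [beta_eq, beta_eq, ← abs_two, ← abs_div]; congr 1; ring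
    _ ≤ (|(1 - u) ^ k - (1 - v) ^ k| + |√(betaDiscr k u) - √(betaDiscr k v)|) / 2 := by
        gcongr; exact (abs_add_le _ _).trans_eq (by rw [abs_sub_comm ((1 - v) ^ k)])
    _ ≤ (3 * k + 2) / 2 * |u - v| := by linarith

end Beta

theorem exp_neg_le_half {x : ℝ} (hx : 1 ≤ x) : exp (-x) ≤ 1 / 2 := by
  have h2 : 2 ≤ exp 1 := by linarith [add_one_le_exp 1]
  calc exp (-x) ≤ exp (-1) := exp_le_exp.2 (neg_le_neg hx)
    _ = (exp 1)⁻¹ := exp_neg 1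
    _ ≤ 1 / 2 := by rw [one_div]; exact inv_anti₀ two_pos h2

theorem lipschitzOnWith_gfun (k : ℕ) : LipschitzOnWith (3 * k + 2) (gfun k) (Ici 1) := by
  have hexp : MapsTo (fun x : ℝ => 1 - exp (-x)) (Ici 1) (Icc (1 / 2) 1) := fun x hx =>
    ⟨by linarith [exp_neg_le_half hx], by linarith [exp_pos (-x)]⟩
  have hbeta : MapsTo (beta k) (Icc (1 / 2) 1) (Ici ((2⁻¹ : ℝ≥0) : ℝ)) := fun u hu => by
    simpa using half_le_beta k hu
  have h := (lipschitzOnWith_log_Ici (by norm_num)).comp ((lipschitzOnWith_beta k).comp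
    (lipschitzOnWith_one_sub_exp_neg.mono (Ici_subset_Ici.2 zero_le_one)) hexp) (hbeta.comp hexp)
  rw [inv_inv, mul_one, mul_div_cancel₀ _ two_ne_zero] at h
  exact lipschitzOnWith_neg_iff.2 h

theorem inv_le_pow_of_rpow_neg_inv_le {p a : ℝ} {n : ℕ} (hp : 0 < p) (hn : n ≠ 0)
    (ha : p ^ (-1 / (n : ℝ)) ≤ a) : p⁻¹ ≤ a ^ n :=
  calc p⁻¹ = (p ^ (-1 / (n : ℝ))) ^ n := by
        rw [← rpow_natCast, ← rpow_mul hp.le, div_mul_cancel₀ _ (Nat.cast_ne_zero.2 hn),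
          rpow_neg_one]
    _ ≤ a ^ n := pow_le_pow_left₀ (rpow_nonneg hp.le _) ha n

/-- **Lemma (Statement 18).** Fix `d ≥ 2` and `ℓ ≥ 0`. There is a constant `c₂ > 0` such that
for all sufficiently small `p > 0` and all reals `a, b` with
`p^{−1/(d−1)} ≤ a ≤ b ≤ 2p^{−1/(d−1)}`,
`g_{ℓ+1}(a^{d−1} q) − g_{ℓ+1}(b^{d−1} q) ≤ c₂ (b^{d−1} − a^{d−1}) q` where `q = −log(1−p)`. -/
theorem gfun_decrement (d ℓ : ℕ) (hd : 2 ≤ d) :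
    ∃ c2 : ℝ, 0 < c2 ∧ ∃ p0 : ℝ, 0 < p0 ∧ ∀ p : ℝ, 0 < p → p ≤ p0 →
      ∀ a b : ℝ, p ^ (-(1 : ℝ) / ((d : ℝ) - 1)) ≤ a → a ≤ b →
        b ≤ 2 * p ^ (-(1 : ℝ) / ((d : ℝ) - 1)) →
        gfun (ℓ + 1) (a ^ (d - 1) * (-Real.log (1 - p))) -
            gfun (ℓ + 1) (b ^ (d - 1) * (-Real.log (1 - p)))
          ≤ c2 * (b ^ (d - 1) - a ^ (d - 1)) * (-Real.log (1 - p)) := by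
  refine ⟨3 * (ℓ + 1) + 2, by positivity, 1 / 2, by norm_num, fun p hp hp0 a b ha hab _ => ?_⟩
  have hq : p ≤ -log (1 - p) := by linarith [log_le_sub_one_of_pos (by linarith : 0 < 1 - p)]
  have ha0 : 0 ≤ a := (rpow_nonneg hp.le _).trans ha
  rw [← Nat.cast_pred (by omega)] at ha
  have hpa : p⁻¹ ≤ a ^ (d - 1) := inv_le_pow_of_rpow_neg_inv_le hp (by omega) ha
  have hx : 1 ≤ a ^ (d - 1) * -log (1 - p) :=
    calc 1 = p⁻¹ * p := (inv_mul_cancel₀ hp.ne').symm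
      _ ≤ a ^ (d - 1) * -log (1 - p) := mul_le_mul hpa hq hp.le (hpa.trans' (by positivity))
  have hxy : a ^ (d - 1) * -log (1 - p) ≤ b ^ (d - 1) * -log (1 - p) :=
    mul_le_mul_of_nonneg_right (pow_le_pow_left₀ ha0 hab _) (hp.le.trans hq)
  have h := (lipschitzOnWith_gfun (ℓ + 1)).le_add_mul hx (hx.trans hxy)
  rw [dist_comm, dist_eq, abs_of_nonneg (sub_nonneg.2 hxy)] at h
  push_cast at h
  linarith

end Boot
end
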